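/- arXiv:1506.00479 — 11 statements merged into one kernel-verified Lean document; each statement's English description precedes it below -/
import Mathlib

section
/- Let U ⊆ ℚ be a semilinear set that is unbounded in one direction, i.e., U is not bounded but there exists a ∈ ℚ with U ⊆ [a,∞) or U ⊆ (−∞,a]. Then there exists b ∈ ℚ such that the set W = {x ∈ ℚ | x ∈ U and b − x ∈ U} is bounded and contains a nonempty open interval; in particular W is bounded and contains more than one point. -/
/-- A linear set in ℚ^n: the solution set of a finite conjunction of linear
inequalities `c₁x₁+…+cₙxₙ ≤ b` or `c₁x₁+…+cₙxₙ < b` with rational coefficients. -/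
def IsLinearSetQ (n : ℕ) (S : Set (Fin n → ℚ)) : Prop :=
  ∃ (m : ℕ) (c : Fin m → Fin n → ℚ) (b : Fin m → ℚ) (strict : Fin m → Bool),
    S = {x | ∀ i, if strict i then (∑ j, c i j * x j) < b i else (∑ j, c i j * x j) ≤ b i}

/-- A semilinear set: a finite union of linear sets. -/
def IsSemilinear (n : ℕ) (S : Set (Fin n → ℚ)) : Prop :=
  ∃ (k : ℕ) (f : Fin k → Set (Fin n → ℚ)), (∀ i, IsLinearSetQ n (f i)) ∧ S = ⋃ i, f i

/-- A unary semilinear relation: a semilinear subset of ℚ. -/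
def IsSemilinear1 (U : Set ℚ) : Prop :=
  IsSemilinear 1 {v : Fin 1 → ℚ | v 0 ∈ U}

/-- A set U ⊆ ℚ is bounded if U ⊆ [−a, a] for some a ∈ ℚ. -/
def BoundedSet (U : Set ℚ) : Prop := ∃ a : ℚ, U ⊆ Set.Icc (-a) a

/-!
A semilinear subset of `ℚ` is a finite union of intervals, so if it is bounded below but not above,
one of these intervals is a ray `(t, ∞)`. For `b = 2t + 2` the set `W = U ∩ (b - U)` contains
`(t, t + 2)`, and it is bounded since both `x` and `b - x` lie in `U ⊆ [a, ∞)`. The case of a set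
bounded above is dual.
-/

open Set

theorem boundedSet_iff_bddBelow_bddAbove {S : Set ℚ} : BoundedSet S ↔ BddBelow S ∧ BddAbove S := by
  constructor
  · rintro ⟨a, ha⟩
    exact ⟨⟨-a, fun x hx => (ha hx).1⟩, ⟨a, fun x hx => (ha hx).2⟩⟩
  · rintro ⟨⟨l, hl⟩, ⟨u, hu⟩⟩
    refine ⟨max |l| |u|, fun x hx => ⟨?_, ?_⟩⟩
    · linarith [hl hx, neg_abs_le l, le_max_left |l| |u|]
    · linarith [hu hx, le_abs_self u, le_max_right |l| |u|]

theorem IsLinearSetQ.ordConnected {S : Set (Fin 1 → ℚ)} (hS : IsLinearSetQ 1 S) :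
    {x : ℚ | (fun _ => x) ∈ S}.OrdConnected := by
  obtain ⟨m, c, b, strict, rfl⟩ := hS
  refine ⟨fun x hx z hz y ⟨hxy, hyz⟩ i => ?_⟩
  have hxi := hx i
  have hzi := hz i
  simp only [Fin.sum_univ_one] at hxi hzi ⊢
  split_ifs at hxi hzi ⊢ <;> rcases le_total 0 (c i 0) with hc | hc <;> nlinarith

theorem IsSemilinear1.exists_eq_iUnion_ordConnected {U : Set ℚ} (hU : IsSemilinear1 U) :
    ∃ (k : ℕ) (f : Fin k → Set ℚ), (∀ i, (f i).OrdConnected) ∧ U = ⋃ i, f i := by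
  obtain ⟨k, f, hf, heq⟩ := hU
  refine ⟨k, fun i => {x | (fun _ => x) ∈ f i}, fun i => (hf i).ordConnected, ?_⟩
  ext x
  simpa using congrArg (fun S => (fun _ : Fin 1 => x) ∈ S) heq

section FiniteUnion

variable {α ι : Type*} [LinearOrder α] [Nonempty α] [Finite ι] {f : ι → Set α}

theorem exists_Ioi_subset_iUnion_of_not_bddAbove (hf : ∀ i, (f i).OrdConnected)
    (h : ¬BddAbove (⋃ i, f i)) : ∃ t, Ioi t ⊆ ⋃ i, f i := by
  obtain ⟨i, hi⟩ : ∃ i, ¬BddAbove (f i) := by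
    simpa [biUnion_univ] using mt (finite_univ (α := ι)).bddAbove_biUnion.mpr (by simpa using h)
  obtain ⟨x₀, hx₀⟩ := nonempty_of_not_bddAbove hi
  refine ⟨x₀, fun y hy => mem_iUnion_of_mem i ?_⟩
  obtain ⟨z, hz, hyz⟩ := not_bddAbove_iff.mp hi y
  exact (hf i).out hx₀ hz ⟨hy.le, hyz.le⟩

theorem exists_Iio_subset_iUnion_of_not_bddBelow (hf : ∀ i, (f i).OrdConnected)
    (h : ¬BddBelow (⋃ i, f i)) : ∃ t, Iio t ⊆ ⋃ i, f i :=
  exists_Ioi_subset_iUnion_of_not_bddAbove (α := αᵒᵈ) (fun i => (hf i).dual) h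

end FiniteUnion

section Window

variable {U : Set ℚ} {a t : ℚ}

theorem boundedSet_and_Ioo_subset_of_Ioi_subset (ha : U ⊆ Ici a) (ht : Ioi t ⊆ U) :
    BoundedSet {x | x ∈ U ∧ (2 * t + 2) - x ∈ U} ∧
      Ioo t (t + 2) ⊆ {x | x ∈ U ∧ (2 * t + 2) - x ∈ U} := by
  refine ⟨boundedSet_iff_bddBelow_bddAbove.mpr ⟨⟨a, fun x hx => ha hx.1⟩, ⟨2 * t + 2 - a, ?_⟩⟩, ?_⟩
  · rintro x ⟨-, hx⟩
    linarith [mem_Ici.mp (ha hx)]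
  · rintro x ⟨htx, hxt⟩
    exact ⟨ht htx, ht (by rw [mem_Ioi]; linarith)⟩

theorem boundedSet_and_Ioo_subset_of_Iio_subset (ha : U ⊆ Iic a) (ht : Iio t ⊆ U) :
    BoundedSet {x | x ∈ U ∧ (2 * t - 2) - x ∈ U} ∧
      Ioo (t - 2) t ⊆ {x | x ∈ U ∧ (2 * t - 2) - x ∈ U} := by
  refine ⟨boundedSet_iff_bddBelow_bddAbove.mpr ⟨⟨2 * t - 2 - a, ?_⟩, ⟨a, fun x hx => ha hx.1⟩⟩, ?_⟩
  · rintro x ⟨-, hx⟩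
    linarith [mem_Iic.mp (ha hx)]
  · rintro x ⟨hxt, htx⟩
    exact ⟨ht htx, ht (by rw [mem_Iio]; linarith)⟩

end Window

/-- If U is a semilinear subset of ℚ that is unbounded in one direction, then
there exists b ∈ ℚ such that W = {x | x ∈ U ∧ b − x ∈ U} is bounded and
contains a nonempty open interval. -/
theorem stmt1 (U : Set ℚ) (hU : IsSemilinear1 U)
    (hnb : ¬ BoundedSet U)
    (hone : ∃ a : ℚ, U ⊆ Set.Ici a ∨ U ⊆ Set.Iic a) :
    ∃ b : ℚ, BoundedSet {x : ℚ | x ∈ U ∧ b - x ∈ U} ∧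
      ∃ c d : ℚ, c < d ∧ Set.Ioo c d ⊆ {x : ℚ | x ∈ U ∧ b - x ∈ U} := by
  rw [boundedSet_iff_bddBelow_bddAbove] at hnb
  obtain ⟨k, f, hf, rfl⟩ := hU.exists_eq_iUnion_ordConnected
  obtain ⟨a, ha | ha⟩ := hone
  · obtain ⟨t, ht⟩ := exists_Ioi_subset_iUnion_of_not_bddAbove hf
      fun hab => hnb ⟨⟨a, ha⟩, hab⟩
    obtain ⟨hW, hI⟩ := boundedSet_and_Ioo_subset_of_Ioi_subset ha ht
    exact ⟨_, hW, _, _, by linarith, hI⟩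
  · obtain ⟨t, ht⟩ := exists_Iio_subset_iUnion_of_not_bddBelow hf
      fun hbe => hnb ⟨hbe, ⟨a, ha⟩⟩
    obtain ⟨hW, hI⟩ := boundedSet_and_Ioo_subset_of_Iio_subset ha ht
    exact ⟨_, hW, _, _, by linarith, hI⟩
end

section
/- Let U ⊆ ℚ be a nonempty bounded semilinear set with U ⊆ [ε,∞) for some rational ε > 0. Then for every rational δ > 0 there exist elements p⁻, p⁺ ∈ U such that the set V = (1/p⁻)·U ∩ (1/p⁺)·U satisfies 1 ∈ V and V ⊆ (1−δ, 1+δ). -/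
/-- c·U = {c·x | x ∈ U}. -/
def scaleSet (c : ℚ) (U : Set ℚ) : Set ℚ := (fun x => c * x) '' U

section ArchimedeanField

variable {K : Type*} [Field K] [LinearOrder K] [IsStrictOrderedRing K] [Archimedean K]

theorem exists_mem_forall_lt_mul_of_bddAbove {S : Set K} (hne : S.Nonempty)
    (hpos : S ⊆ Set.Ioi 0) (hbdd : BddAbove S) {c : K} (hc : 1 < c) :
    ∃ p ∈ S, ∀ u ∈ S, u < c * p := by
  by_contra! hgrow
  obtain ⟨p, hp⟩ := hne
  obtain ⟨a, ha⟩ := hbdd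
  have hpow : ∀ n : ℕ, ∃ u ∈ S, c ^ n * p ≤ u := by
    intro n
    induction n with
    | zero => exact ⟨p, hp, by simp⟩
    | succ n ih =>
      obtain ⟨u, hu, hle⟩ := ih
      obtain ⟨v, hv, hcv⟩ := hgrow u hu
      refine ⟨v, hv, ?_⟩
      calc c ^ (n + 1) * p = c * (c ^ n * p) := by ring
        _ ≤ c * u := by gcongr
        _ ≤ v := hcv
  obtain ⟨n, hn⟩ := pow_unbounded_of_one_lt (a / p) hc
  obtain ⟨u, hu, hle⟩ := hpow n
  have : a < c ^ n * p := (div_lt_iff₀ (hpos hp)).1 hn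
  linarith [ha hu]

theorem exists_mem_forall_lt_mul_of_subset_Ici {S : Set K} (hne : S.Nonempty) {ε : K}
    (hε : 0 < ε) (hsub : S ⊆ Set.Ici ε) {c : K} (hc : 1 < c) :
    ∃ p ∈ S, ∀ v ∈ S, p < c * v := by
  have hpos : ∀ v ∈ S, 0 < v := fun v hv => hε.trans_le (hsub hv)
  obtain ⟨_, ⟨p, hp, rfl⟩, hmax⟩ := exists_mem_forall_lt_mul_of_bddAbove (hne.image (·⁻¹))
    (by rintro _ ⟨v, hv, rfl⟩; exact inv_pos.2 (hpos v hv))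
    ⟨ε⁻¹, by rintro _ ⟨v, hv, rfl⟩; exact inv_anti₀ hε (hsub hv)⟩ hc
  refine ⟨p, hp, fun v hv => ?_⟩
  have h := hmax _ ⟨v, hv, rfl⟩
  rwa [← div_eq_mul_inv, inv_lt_iff_one_lt_mul₀ (hpos v hv), div_mul_eq_mul_div,
    one_lt_div (hpos p hp)] at h

end ArchimedeanField

theorem stmt3_general (U : Set ℚ) (hne : U.Nonempty)
    (hb : BoundedSet U) (ε : ℚ) (hε : 0 < ε) (hsub : U ⊆ Set.Ici ε)
    (δ : ℚ) (hδ : 0 < δ) :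
    ∃ pm ∈ U, ∃ pp ∈ U,
      (1 : ℚ) ∈ scaleSet (1 / pm) U ∩ scaleSet (1 / pp) U ∧
      scaleSet (1 / pm) U ∩ scaleSet (1 / pp) U ⊆ Set.Ioo (1 - δ) (1 + δ) := by
  have hpos : ∀ u ∈ U, 0 < u := fun u hu => hε.trans_le (hsub hu)
  have hc : 1 < 1 + δ := lt_add_of_pos_right 1 hδ
  obtain ⟨a, ha⟩ := hb
  obtain ⟨pm, hpm, hmax⟩ := exists_mem_forall_lt_mul_of_bddAbove hne hpos
    ⟨a, fun u hu => (ha hu).2⟩ hc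
  obtain ⟨pp, hpp, hmin⟩ := exists_mem_forall_lt_mul_of_subset_Ici hne hε hsub hc
  refine ⟨pm, hpm, pp, hpp, ⟨⟨pm, hpm, one_div_mul_cancel (hpos pm hpm).ne'⟩,
    ⟨pp, hpp, one_div_mul_cancel (hpos pp hpp).ne'⟩⟩, ?_⟩
  rintro x ⟨⟨u, hu, rfl⟩, ⟨v, hv, hvx⟩⟩
  simp only [one_div_mul_eq_div] at hvx ⊢
  constructor
  · rw [← hvx, lt_div_iff₀ (hpos pp hpp)]
    nlinarith [hmin v hv, hpos v hv, hpos pp hpp, mul_pos hδ hδ]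
  · rw [div_lt_iff₀ (hpos pm hpm)]
    exact hmax u hu

/-- Let U ⊆ ℚ be a nonempty bounded semilinear set with U ⊆ [ε,∞) for some
rational ε > 0.  Then for every rational δ > 0 there are p⁻, p⁺ ∈ U such that
V = (1/p⁻)·U ∩ (1/p⁺)·U satisfies 1 ∈ V and V ⊆ (1−δ, 1+δ). -/
theorem stmt3 (U : Set ℚ) (hU : IsSemilinear1 U) (hne : U.Nonempty)
    (hb : BoundedSet U) (ε : ℚ) (hε : 0 < ε) (hsub : U ⊆ Set.Ici ε)
    (δ : ℚ) (hδ : 0 < δ) :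
    ∃ pm ∈ U, ∃ pp ∈ U,
      (1 : ℚ) ∈ scaleSet (1 / pm) U ∩ scaleSet (1 / pp) U ∧
      scaleSet (1 / pm) U ∩ scaleSet (1 / pp) U ⊆ Set.Ioo (1 - δ) (1 + δ) :=
  stmt3_general U hne hb ε hε hsub δ hδ
end

section
/- Let U ⊆ ℚ be a bounded semilinear set such that U ∩ (−ε,ε) = ∅ for some rational ε > 0 and U ∩ (−1)·U ≠ ∅. Then for every rational δ > 0 there exist nonzero rationals c₁, c₂, c₃, c₄ such that the set V = c₁·U ∩ c₂·U ∩ c₃·U ∩ c₄·U satisfies {−1, 1} ⊆ V and V ⊆ (−1−δ, −1+δ) ∪ (1−δ, 1+δ). -/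
section ApproximateExtrema

variable {K : Type*} [Field K] [LinearOrder K] [IsStrictOrderedRing K] [Archimedean K]
  {S : Set K} {ε r : K}

theorem exists_mem_forall_lt_mul (hS : BddAbove S) {s₀ : K} (hs₀ : s₀ ∈ S) (h0 : 0 < s₀)
    (hr : 1 < r) : ∃ s ∈ S, ∀ y ∈ S, y < r * s := by
  by_contra! h
  -- otherwise `S` would contain elements `≥ s₀ rⁿ` for every `n`
  have grow : ∀ n : ℕ, ∃ s ∈ S, s₀ * r ^ n ≤ s := by
    intro n
    induction n with
    | zero => exact ⟨s₀, hs₀, by simp⟩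
    | succ n ih =>
      obtain ⟨s, hsS, hs⟩ := ih
      obtain ⟨y, hyS, hy⟩ := h s hsS
      refine ⟨y, hyS, ?_⟩
      calc s₀ * r ^ (n + 1) = r * (s₀ * r ^ n) := by ring
        _ ≤ r * s := by gcongr
        _ ≤ y := hy
  obtain ⟨a, ha⟩ := hS
  obtain ⟨n, hn⟩ := pow_unbounded_of_one_lt (a / s₀) hr
  obtain ⟨s, hsS, hs⟩ := grow n
  rw [div_lt_iff₀' h0] at hn
  linarith [ha hsS]

theorem exists_mem_forall_mul_lt (hne : S.Nonempty) (hε : 0 < ε) (hεS : ε ∈ lowerBounds S)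
    (hr : 1 < r) : ∃ s ∈ S, ∀ y ∈ S, s < r * y := by
  have hpos : ∀ y ∈ S, 0 < y := fun y hy => hε.trans_le (hεS hy)
  obtain ⟨y₀, hy₀⟩ := hne
  obtain ⟨_, ⟨s, hsS, rfl⟩, hs⟩ := exists_mem_forall_lt_mul (S := (·⁻¹) '' S)
    ⟨ε⁻¹, by rintro _ ⟨y, hy, rfl⟩; exact inv_anti₀ hε (hεS hy)⟩ ⟨y₀, hy₀, rfl⟩
    (inv_pos.2 (hpos y₀ hy₀)) hr
  refine ⟨s, hsS, fun y hy => ?_⟩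
  have := hs _ ⟨y, hy, rfl⟩
  have hs0 := hpos s hsS
  have hy0 := hpos y hy
  field_simp at this
  linarith

end ApproximateExtrema

theorem mem_scaleSet_inv_iff {U : Set ℚ} {c x : ℚ} (hc : c ≠ 0) :
    x ∈ scaleSet c⁻¹ U ↔ c * x ∈ U :=
  Set.mem_image_iff_of_inverse (f := (c⁻¹ * ·)) (g := (c * ·))
    (fun y => by field_simp) (fun y => by field_simp)

def symmPos (U : Set ℚ) : Set ℚ := {y | 0 < y ∧ y ∈ U ∧ -y ∈ U}

theorem pm_one_subset_scaleSet_inter {U : Set ℚ} {s : ℚ} (hs : s ∈ symmPos U) :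
    ({-1, 1} : Set ℚ) ⊆ scaleSet s⁻¹ U ∩ scaleSet (-s)⁻¹ U := by
  have hs0 : s ≠ 0 := hs.1.ne'
  have hs0' : -s ≠ 0 := neg_ne_zero.2 hs0
  rintro x (rfl | rfl) <;>
    simp only [Set.mem_inter_iff, mem_scaleSet_inv_iff hs0, mem_scaleSet_inv_iff hs0']
  · simpa using ⟨hs.2.2, hs.2.1⟩
  · simpa using ⟨hs.2.1, hs.2.2⟩

theorem mul_abs_mem_symmPos {U : Set ℚ} {c x : ℚ} (hc : 0 < c) (h0 : (0 : ℚ) ∉ U)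
    (hx : x ∈ scaleSet c⁻¹ U ∩ scaleSet (-c)⁻¹ U) : c * |x| ∈ symmPos U := by
  rw [Set.mem_inter_iff, mem_scaleSet_inv_iff hc.ne', mem_scaleSet_inv_iff (neg_ne_zero.2 hc.ne'),
    neg_mul] at hx
  obtain ⟨hpos, hneg⟩ := hx
  have hx0 : x ≠ 0 := by rintro rfl; exact h0 (by simpa using hpos)
  refine ⟨by positivity, ?_⟩
  rcases abs_choice x with h | h <;> rw [h]
  · exact ⟨hpos, hneg⟩
  · simpa using ⟨hneg, hpos⟩

theorem mem_Ioo_union_Ioo_of_abs_bounds {x δ : ℚ} (hδ : 0 < δ) (hlow : 1 < (1 + δ) * |x|)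
    (hup : |x| < 1 + δ) : x ∈ Set.Ioo (-1 - δ) (-1 + δ) ∪ Set.Ioo (1 - δ) (1 + δ) := by
  -- `1 / (1 + δ) ≥ 1 - δ` because `(1 - δ)(1 + δ) = 1 - δ² ≤ 1`
  have hlow' : 1 - δ < |x| := by nlinarith [abs_nonneg x]
  rcases abs_choice x with h | h <;> rw [h] at hlow' hup
  · exact Or.inr ⟨hlow', hup⟩
  · exact Or.inl ⟨by linarith, by linarith⟩

theorem stmt4_general (U : Set ℚ) (hb : BoundedSet U)
    (ε : ℚ) (hε : 0 < ε) (hdisj : U ∩ Set.Ioo (-ε) ε = ∅)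
    (hsym : (U ∩ scaleSet (-1) U).Nonempty)
    (δ : ℚ) (hδ : 0 < δ) :
    ∃ c₁ c₂ c₃ c₄ : ℚ, c₁ ≠ 0 ∧ c₂ ≠ 0 ∧ c₃ ≠ 0 ∧ c₄ ≠ 0 ∧
      ({-1, 1} : Set ℚ) ⊆ scaleSet c₁ U ∩ scaleSet c₂ U ∩ scaleSet c₃ U ∩ scaleSet c₄ U ∧
      scaleSet c₁ U ∩ scaleSet c₂ U ∩ scaleSet c₃ U ∩ scaleSet c₄ U ⊆
        Set.Ioo (-1 - δ) (-1 + δ) ∪ Set.Ioo (1 - δ) (1 + δ) := by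
  have hgap : ∀ x ∈ U, x ∉ Set.Ioo (-ε) ε :=
    Set.disjoint_left.1 (Set.disjoint_iff_inter_eq_empty.2 hdisj)
  have h0 : (0 : ℚ) ∉ U := fun h => hgap 0 h ⟨by linarith, hε⟩
  have hne : (symmPos U).Nonempty := by
    obtain ⟨t, htU, htU'⟩ := hsym
    exact ⟨_, mul_abs_mem_symmPos (x := t) one_pos h0
      ⟨⟨t, htU, by simp⟩, by rwa [inv_neg, inv_one]⟩⟩
  have hεS : ε ∈ lowerBounds (symmPos U) := fun y hy =>
    not_lt.1 fun hlt => hgap y hy.2.1 ⟨by linarith [hy.1], hlt⟩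
  have hbdd : BddAbove (symmPos U) := by
    obtain ⟨a, ha⟩ := hb
    exact ⟨a, fun y hy => (ha hy.2.1).2⟩
  have hr : 1 < 1 + δ := by linarith
  obtain ⟨s, hsS, hs⟩ := exists_mem_forall_lt_mul hbdd hne.some_mem hne.some_mem.1 hr
  obtain ⟨s', hs'S, hs'⟩ := exists_mem_forall_mul_lt hne hε hεS hr
  have hs0 : 0 < s := hsS.1
  have hs'0 : 0 < s' := hs'S.1
  refine ⟨s⁻¹, (-s)⁻¹, s'⁻¹, (-s')⁻¹, by simp [hs0.ne'], by simp [hs0.ne'], by simp [hs'0.ne'],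
    by simp [hs'0.ne'], fun x hx => ?_, ?_⟩
  · have h₁₂ := pm_one_subset_scaleSet_inter hsS hx
    have h₃₄ := pm_one_subset_scaleSet_inter hs'S hx
    exact ⟨⟨h₁₂, h₃₄.1⟩, h₃₄.2⟩
  · rintro x ⟨⟨hx₁₂, hx₃⟩, hx₄⟩
    have hup := hs _ (mul_abs_mem_symmPos hs0 h0 hx₁₂)
    have hlow := hs' _ (mul_abs_mem_symmPos hs'0 h0 ⟨hx₃, hx₄⟩)
    refine mem_Ioo_union_Ioo_of_abs_bounds hδ ?_ ?_
    · rw [mul_left_comm] at hlow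
      exact (lt_mul_iff_one_lt_right hs'0).1 hlow
    · rw [mul_comm _ s] at hup
      exact lt_of_mul_lt_mul_left hup hs0.le

/-- Let U ⊆ ℚ be a bounded semilinear set with U ∩ (−ε,ε) = ∅ for some rational
ε > 0 and U ∩ (−1)·U ≠ ∅.  Then for every rational δ > 0 there are nonzero
rationals c₁, c₂, c₃, c₄ such that V = c₁·U ∩ c₂·U ∩ c₃·U ∩ c₄·U satisfies
{−1, 1} ⊆ V and V ⊆ (−1−δ, −1+δ) ∪ (1−δ, 1+δ). -/
theorem stmt4 (U : Set ℚ) (hU : IsSemilinear1 U) (hb : BoundedSet U)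
    (ε : ℚ) (hε : 0 < ε) (hdisj : U ∩ Set.Ioo (-ε) ε = ∅)
    (hsym : (U ∩ scaleSet (-1) U).Nonempty)
    (δ : ℚ) (hδ : 0 < δ) :
    ∃ c₁ c₂ c₃ c₄ : ℚ, c₁ ≠ 0 ∧ c₂ ≠ 0 ∧ c₃ ≠ 0 ∧ c₄ ≠ 0 ∧
      ({-1, 1} : Set ℚ) ⊆ scaleSet c₁ U ∩ scaleSet c₂ U ∩ scaleSet c₃ U ∩ scaleSet c₄ U ∧
      scaleSet c₁ U ∩ scaleSet c₂ U ∩ scaleSet c₃ U ∩ scaleSet c₄ U ⊆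
        Set.Ioo (-1 - δ) (-1 + δ) ∪ Set.Ioo (1 - δ) (1 + δ) :=
  stmt4_general U hb ε hε hdisj hsym δ hδ
end

section
/- Let P = P₁ ∪ … ∪ P_k and Q = Q₁ ∪ … ∪ Q_l be nonempty subsets of ℚ^n, where each P_i and each Q_j is a linear set. Suppose that both P and Q satisfy the line condition. If the affine hulls of P and Q coincide, aff(P) = aff(Q) = A, then there exist indices i and j such that aff(P_i ∩ Q_j) = A. -/
/-- The affine hull of S ⊆ ℚ^n: the set of all affine combinations
Σ xᵢ • pᵢ with pᵢ ∈ S, xᵢ ∈ ℚ, Σ xᵢ = 1. -/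
def affHull {n : ℕ} (S : Set (Fin n → ℚ)) : Set (Fin n → ℚ) :=
  {x | ∃ (k : ℕ) (w : Fin k → ℚ) (p : Fin k → (Fin n → ℚ)),
    (∀ i, p i ∈ S) ∧ (∑ i, w i) = 1 ∧ x = ∑ i, w i • p i}

/-- S satisfies the line condition if for all distinct a, b ∈ ℚ^n, whenever
{y ∈ ℚ | (1−y)•a + y•b ∈ S} contains at least two elements, it is unbounded
above and unbounded below. -/
def LineCondition {n : ℕ} (S : Set (Fin n → ℚ)) : Prop :=
  ∀ a b : Fin n → ℚ, a ≠ b →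
    (∃ y₁ y₂ : ℚ, y₁ ≠ y₂ ∧ (1 - y₁) • a + y₁ • b ∈ S ∧ (1 - y₂) • a + y₂ • b ∈ S) →
    (∀ K : ℚ, ∃ y : ℚ, K < y ∧ (1 - y) • a + y • b ∈ S) ∧
    (∀ K : ℚ, ∃ y : ℚ, y < K ∧ (1 - y) • a + y • b ∈ S)

/-!
Write `rec S` for the recession cone of `S`: the directions `v` such that every ray from a point
of `S` in direction `v` stays in `S`. A ray that meets a linear set at arbitrarily large times
eventually stays in it, so its direction lies in the recession cone.

A set with the line condition that is covered by finitely many affine subspaces lies in one of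
them: otherwise a line through a point lying only in the first subspace and a point outside the
first meets some subspace in two points, hence lies in it. Covering `⋃ Sᵢ` by the subspaces
`a + span (rec Sᵢ)` shows that the recession cone of some piece spans the direction `V` of the
affine hull, so that piece already has the full affine hull.

The pieces `Pᵢ ∩ Qⱼ` are linear and their union `P ∩ Q` again has the line condition, so it
remains to see that `P ∩ Q` is nonempty with direction `V`. Take pieces `Pₐ`, `Q_b` whose
recession cones `C`, `D` span `V`, and `w` in the relative interior of `C`. For `c ∈ C`, a line
in direction `w + c` through two points of `Q_b` (found using the interior of `D`) eventually
runs inside `Pₐ`, and, by the line condition for `Q`, inside a single `Qⱼ`. Hence `w + c` is a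
direction of `P ∩ Q` for every `c ∈ C`, and these vectors span `V`.
-/

open Filter AffineMap

theorem affHull_eq_affineSpan {n : ℕ} (S : Set (Fin n → ℚ)) :
    affHull S = (affineSpan ℚ S : Set (Fin n → ℚ)) := by
  ext x
  constructor
  · rintro ⟨k, w, p, hp, hw, rfl⟩
    rw [← Finset.affineCombination_eq_linear_combination _ _ _ hw]
    exact affineSpan_mono ℚ (Set.range_subset_iff.2 hp) (affineCombination_mem_affineSpan hw p)
  · intro hx
    rw [← Subtype.range_coe (s := S)] at hx
    obtain ⟨s, w, hw, rfl⟩ := eq_affineCombination_of_mem_affineSpan hx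
    rw [Finset.affineCombination_eq_linear_combination _ _ _ hw]
    refine ⟨s.card, fun i => w (s.equivFin.symm i), fun i => (s.equivFin.symm i : S),
      fun i => Subtype.prop _, ?_, ?_⟩
    · rw [← hw, ← Finset.sum_coe_sort s]
      exact Fintype.sum_equiv s.equivFin.symm _ _ fun _ => rfl
    · rw [← Finset.sum_coe_sort s]
      exact (Fintype.sum_equiv s.equivFin.symm _ _ fun _ => rfl).symm

section RecessionCone

variable {𝕜 E : Type*} [Field 𝕜] [LinearOrder 𝕜] [IsStrictOrderedRing 𝕜]
  [AddCommGroup E] [Module 𝕜 E]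

variable (𝕜) in
def recessionCone (S : Set E) : PointedCone 𝕜 E where
  carrier := {v | ∀ x ∈ S, ∀ t : 𝕜, 0 ≤ t → x + t • v ∈ S}
  zero_mem' := by simp +contextual
  add_mem' hu hv x hx t ht := by
    simpa only [smul_add, add_assoc] using hv _ (hu x hx t ht) t ht
  smul_mem' c v hv x hx t ht := by
    simpa only [← Nonneg.coe_smul, smul_smul] using hv x hx (t * c) (mul_nonneg ht c.2)

variable {S : Set E} {v y : E}

theorem eventually_add_smul_mem_of_mem_recessionCone (hv : v ∈ recessionCone 𝕜 S)
    {t₀ : 𝕜} (h : y + t₀ • v ∈ S) : ∀ᶠ t : 𝕜 in atTop, y + t • v ∈ S := by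
  filter_upwards [eventually_ge_atTop t₀] with t ht
  simpa only [add_assoc, ← add_smul, add_sub_cancel] using hv _ h (t - t₀) (sub_nonneg.2 ht)

theorem PointedCone.mem_recessionCone (K : PointedCone 𝕜 E) {w : E} (hw : w ∈ K) :
    w ∈ recessionCone 𝕜 (K : Set E) :=
  fun _ hx _ ht => K.add_mem hx (K.smul_mem ht hw)

theorem span_recessionCone_le_vectorSpan {x : E} (hx : x ∈ S) :
    Submodule.span 𝕜 (recessionCone 𝕜 S : Set E) ≤ vectorSpan 𝕜 S :=
  Submodule.span_le.2 fun v hv => by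
    simpa using vsub_mem_vectorSpan 𝕜 (hv x hx 1 zero_le_one) hx

theorem PointedCone.exists_forall_eventually_add_smul_mem [FiniteDimensional 𝕜 E]
    (K : PointedCone 𝕜 E) :
    ∃ w ∈ K, ∀ u ∈ Submodule.span 𝕜 (K : Set E), ∀ᶠ t : 𝕜 in atTop, u + t • w ∈ K := by
  classical
  obtain ⟨s, hsK, hs⟩ := (Submodule.fg_span_iff_fg_span_finset_subset (K : Set E)).1
    (IsNoetherian.noetherian (R := 𝕜) _)
  have hw : ∑ x ∈ s, x ∈ K := K.sum_mem fun x hx => hsK hx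
  refine ⟨∑ x ∈ s, x, hw, fun u hu => ?_⟩
  -- the sum of the generators absorbs each generator with either sign
  suffices h : ∃ N : 𝕜, u + N • ∑ x ∈ s, x ∈ K ∧ -u + N • ∑ x ∈ s, x ∈ K by
    obtain ⟨N, hN, -⟩ := h
    exact eventually_add_smul_mem_of_mem_recessionCone (K.mem_recessionCone hw) hN
  rw [hs] at hu
  induction hu using Submodule.span_induction with
  | mem x hx =>
    refine ⟨1, by simpa using K.add_mem (hsK hx) hw, ?_⟩
    rw [one_smul, ← Finset.add_sum_erase s _ hx, neg_add_cancel_left]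
    exact K.sum_mem fun y hy => hsK (Finset.mem_of_mem_erase hy)
  | zero => exact ⟨0, by simp, by simp⟩
  | add u u' _ _ hu hu' =>
    obtain ⟨N, hN, hN'⟩ := hu
    obtain ⟨M, hM, hM'⟩ := hu'
    refine ⟨N + M, ?_, ?_⟩
    · convert K.add_mem hN hM using 1; module
    · convert K.add_mem hN' hM' using 1; module
  | smul c u _ hu =>
    obtain ⟨N, hN, hN'⟩ := hu
    rcases le_total 0 c with hc | hc
    · refine ⟨c * N, ?_, ?_⟩
      · convert K.smul_mem hc hN using 1; module
      · convert K.smul_mem hc hN' using 1; module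
    · refine ⟨-c * N, ?_, ?_⟩
      · convert K.smul_mem (neg_nonneg.2 hc) hN' using 1; module
      · convert K.smul_mem (neg_nonneg.2 hc) hN using 1; module

theorem nonempty_and_mem_vectorSpan_of_eventually {R : Set E} {p δ : E}
    (h : ∀ᶠ t : 𝕜 in atTop, p + t • δ ∈ R) : R.Nonempty ∧ δ ∈ vectorSpan 𝕜 R := by
  obtain ⟨t, ht⟩ := eventually_atTop.1 h
  refine ⟨⟨_, ht t le_rfl⟩, ?_⟩
  simpa [add_smul, ← add_assoc] using
    vsub_mem_vectorSpan 𝕜 (ht (t + 1) (le_add_of_nonneg_right zero_le_one)) (ht t le_rfl)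

end RecessionCone

theorem AffineSubspace.lineMap_mem_of_lineMap_mem {k V P : Type*} [Field k] [AddCommGroup V]
    [Module k V] [AddTorsor V P] {A : AffineSubspace k P} {a b : P} {y₁ y₂ : k}
    (h₁ : lineMap a b y₁ ∈ A) (h₂ : lineMap a b y₂ ∈ A) (hy : y₁ ≠ y₂) (y : k) :
    lineMap a b y ∈ A := by
  have hy' : y₂ - y₁ ≠ 0 := sub_ne_zero.2 hy.symm
  have : y = lineMap y₁ y₂ ((y - y₁) / (y₂ - y₁)) := by
    rw [lineMap_apply_ring']; field_simp; ring
  rw [this, AffineMap.apply_lineMap]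
  exact AffineMap.lineMap_mem _ h₁ h₂

theorem affineSpan_eq_of_subset_of_vectorSpan_le {k V P : Type*} [Ring k] [AddCommGroup V]
    [Module k V] [AddTorsor V P] {s t : Set P} (hst : s ⊆ t) (hs : s.Nonempty)
    (h : vectorSpan k t ≤ vectorSpan k s) : affineSpan k s = affineSpan k t :=
  AffineSubspace.eq_of_direction_eq_of_nonempty_of_le
    (by simpa only [direction_affineSpan] using le_antisymm (vectorSpan_mono k hst) h)
    ((affineSpan_nonempty k).2 hs) (affineSpan_mono k hst)

section LineCondition

variable {n : ℕ} {U : Set (Fin n → ℚ)} {a b : Fin n → ℚ}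

theorem lineCondition_iff : LineCondition U ↔ ∀ a b : Fin n → ℚ, a ≠ b →
      (∃ y₁ y₂ : ℚ, y₁ ≠ y₂ ∧ lineMap a b y₁ ∈ U ∧ lineMap a b y₂ ∈ U) →
      (∃ᶠ y : ℚ in atTop, lineMap a b y ∈ U) ∧ ∃ᶠ y : ℚ in atBot, lineMap a b y ∈ U := by
  simp only [LineCondition, lineMap_apply_module, frequently_atTop', frequently_atBot']

theorem LineCondition.frequently_atTop (hU : LineCondition U) (hab : a ≠ b) (ha : a ∈ U)
    (hb : b ∈ U) : ∃ᶠ y : ℚ in atTop, lineMap a b y ∈ U :=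
  (lineCondition_iff.1 hU a b hab ⟨0, 1, zero_ne_one, by simpa, by simpa⟩).1

theorem LineCondition.exists_subset_of_subset_biUnion {ι : Type*} (hU : LineCondition U)
    (hne : U.Nonempty) (A : ι → AffineSubspace ℚ (Fin n → ℚ)) (T : Finset ι)
    (hcover : U ⊆ ⋃ j ∈ T, (A j : Set (Fin n → ℚ))) : ∃ j ∈ T, U ⊆ A j := by
  classical
  induction T using Finset.induction_on with
  | empty =>
    obtain ⟨x, hx⟩ := hne
    simpa using hcover hx
  | insert j T hj ih =>
    by_cases hT : U ⊆ ⋃ j ∈ T, (A j : Set (Fin n → ℚ))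
    · obtain ⟨j', hj', hU'⟩ := ih hT
      exact ⟨j', Finset.mem_insert_of_mem hj', hU'⟩
    by_cases hAj : U ⊆ A j
    · exact ⟨j, Finset.mem_insert_self j T, hAj⟩
    obtain ⟨p, hpU, hpT⟩ := Set.not_subset.1 hT
    obtain ⟨q, hqU, hqj⟩ := Set.not_subset.1 hAj
    have hpj : p ∈ A j := by simpa [hpT] using hcover hpU
    have hline : ∃ᶠ y : ℚ in atTop, ∃ j' ∈ insert j T, lineMap p q y ∈ A j' :=
      (hU.frequently_atTop (ne_of_mem_of_not_mem hpj hqj) hpU hqU).mono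
        fun y hy => by simpa using hcover hy
    -- two points of the line lie in one subspace, which then contains all of the line
    obtain ⟨j', hj', hfreq⟩ := (Finset.frequently_exists _).1 hline
    obtain ⟨y₁, hy₁⟩ := hfreq.exists
    obtain ⟨y₂, hy₂, hy₁₂⟩ := (hfreq.and_eventually (eventually_gt_atTop y₁)).exists
    have hmem := AffineSubspace.lineMap_mem_of_lineMap_mem hy₁ hy₂ hy₁₂.ne
    rcases Finset.mem_insert.1 hj' with rfl | hj'T
    · exact absurd (by simpa using hmem 1) hqj
    · exact absurd (Set.mem_biUnion hj'T (by simpa using hmem 0)) hpT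

end LineCondition

section LinearSet

variable {n : ℕ} {S T : Set (Fin n → ℚ)} {a b : Fin n → ℚ}

theorem IsLinearSetQ.inter (hS : IsLinearSetQ n S) (hT : IsLinearSetQ n T) :
    IsLinearSetQ n (S ∩ T) := by
  obtain ⟨m₁, c₁, b₁, s₁, rfl⟩ := hS
  obtain ⟨m₂, c₂, b₂, s₂, rfl⟩ := hT
  refine ⟨m₁ + m₂, Fin.append c₁ c₂, Fin.append b₁ b₂, Fin.append s₁ s₂, ?_⟩
  ext x
  simp only [Set.mem_inter_iff, Set.mem_ofPred_eq, Fin.forall_fin_add, Fin.append_left,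
    Fin.append_right]

theorem IsLinearSetQ.mem_recessionCone_of_frequently (hS : IsLinearSetQ n S) {y v : Fin n → ℚ}
    (h : ∃ᶠ t : ℚ in atTop, y + t • v ∈ S) : v ∈ recessionCone ℚ S := by
  obtain ⟨m, c, b, strict, rfl⟩ := hS
  have hrow : ∀ i (x w : Fin n → ℚ) (t : ℚ),
      ∑ j, c i j * (x + t • w) j = ∑ j, c i j * x j + t * ∑ j, c i j * w j := by
    intro i x w t
    simp only [Pi.add_apply, Pi.smul_apply, smul_eq_mul, mul_add, Finset.sum_add_distrib,
      Finset.mul_sum]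
    congr 1
    exact Finset.sum_congr rfl fun j _ => by ring
  -- a constraint that increased along `v` would fail on the far part of the ray
  have hv : ∀ i, ∑ j, c i j * v j ≤ 0 := by
    intro i
    by_contra! hpos
    obtain ⟨t, ht, hlt⟩ := (h.and_eventually (eventually_gt_atTop
      ((b i - ∑ j, c i j * y j) / ∑ j, c i j * v j))).exists
    have hti := ht i
    rw [div_lt_iff₀ hpos] at hlt
    rw [hrow] at hti
    split_ifs at hti <;> linarith
  intro x hx t ht i
  have hxi := hx i
  have hdec := mul_nonpos_of_nonneg_of_nonpos ht (hv i)
  simp only [hrow] at hxi ⊢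
  split_ifs at hxi ⊢ <;> linarith

theorem IsLinearSetQ.eventually_atTop_of_frequently (hS : IsLinearSetQ n S)
    (h : ∃ᶠ y : ℚ in atTop, lineMap a b y ∈ S) : ∀ᶠ y : ℚ in atTop, lineMap a b y ∈ S := by
  simp only [lineMap_apply_module', add_comm _ a] at h ⊢
  obtain ⟨t₀, ht₀⟩ := h.exists
  exact eventually_add_smul_mem_of_mem_recessionCone (hS.mem_recessionCone_of_frequently h) ht₀

theorem IsLinearSetQ.eventually_atBot_of_frequently (hS : IsLinearSetQ n S)
    (h : ∃ᶠ y : ℚ in atBot, lineMap a b y ∈ S) : ∀ᶠ y : ℚ in atBot, lineMap a b y ∈ S := by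
  have hflip : Tendsto (fun y : ℚ => 1 - y) atBot atTop := by
    simpa only [sub_eq_add_neg] using tendsto_atTop_add_const_left _ 1 tendsto_neg_atBot_atTop
  have hswap (y : ℚ) : lineMap a b y = lineMap b a (1 - y) := (lineMap_apply_one_sub b a y).symm
  simp only [hswap] at h ⊢
  exact hflip.eventually (hS.eventually_atTop_of_frequently (hflip.frequently h))

end LinearSet

section UnionOfLinearSets

variable {n : ℕ} {ι κ : Type*} {S : ι → Set (Fin n → ℚ)} {T : κ → Set (Fin n → ℚ)}
  {a b : Fin n → ℚ}

theorem LineCondition.exists_eventually_lineMap_mem [Finite ι] (hS : ∀ i, IsLinearSetQ n (S i))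
    (hU : LineCondition (⋃ i, S i)) (hab : a ≠ b)
    (hy : ∃ y₁ y₂ : ℚ, y₁ ≠ y₂ ∧ lineMap a b y₁ ∈ ⋃ i, S i ∧ lineMap a b y₂ ∈ ⋃ i, S i) :
    (∃ i, ∀ᶠ y : ℚ in atTop, lineMap a b y ∈ S i) ∧
      ∃ i, ∀ᶠ y : ℚ in atBot, lineMap a b y ∈ S i := by
  obtain ⟨htop, hbot⟩ := lineCondition_iff.1 hU a b hab hy
  simp only [Set.mem_iUnion, frequently_exists] at htop hbot
  obtain ⟨i, hi⟩ := htop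
  obtain ⟨i', hi'⟩ := hbot
  exact ⟨⟨i, (hS i).eventually_atTop_of_frequently hi⟩,
    ⟨i', (hS i').eventually_atBot_of_frequently hi'⟩⟩

theorem LineCondition.exists_eventually_add_smul_mem [Finite ι] (hS : ∀ i, IsLinearSetQ n (S i))
    (hU : LineCondition (⋃ i, S i)) {p δ : Fin n → ℚ} (h₀ : p ∈ ⋃ i, S i)
    (h₁ : p + δ ∈ ⋃ i, S i) : ∃ i, ∀ᶠ t : ℚ in atTop, p + t • δ ∈ S i := by
  rcases eq_or_ne δ 0 with rfl | hδ
  · obtain ⟨i, hi⟩ := Set.mem_iUnion.1 h₀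
    exact ⟨i, .of_forall fun t => by simpa using hi⟩
  have hline (t : ℚ) : lineMap p (p + δ) t = p + t • δ := by
    simp [lineMap_apply_module', add_comm]
  obtain ⟨i, hi⟩ := (hU.exists_eventually_lineMap_mem hS (add_ne_left.2 hδ).symm
    ⟨0, 1, zero_ne_one, by simpa [hline] using h₀, by simpa [hline] using h₁⟩).1
  exact ⟨i, hi.mono fun t ht => by rwa [hline] at ht⟩

theorem LineCondition.iUnion_inter_iUnion [Finite ι] [Finite κ] (hS : ∀ i, IsLinearSetQ n (S i))
    (hT : ∀ j, IsLinearSetQ n (T j)) (hSU : LineCondition (⋃ i, S i))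
    (hTU : LineCondition (⋃ j, T j)) : LineCondition ((⋃ i, S i) ∩ ⋃ j, T j) := by
  rw [lineCondition_iff]
  rintro a b hab ⟨y₁, y₂, hy, h₁, h₂⟩
  obtain ⟨⟨i, hi⟩, i', hi'⟩ := hSU.exists_eventually_lineMap_mem hS hab ⟨y₁, y₂, hy, h₁.1, h₂.1⟩
  obtain ⟨⟨j, hj⟩, j', hj'⟩ := hTU.exists_eventually_lineMap_mem hT hab ⟨y₁, y₂, hy, h₁.2, h₂.2⟩
  exact ⟨((hi.and hj).mono fun y hy => ⟨Set.mem_iUnion_of_mem i hy.1,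
      Set.mem_iUnion_of_mem j hy.2⟩).frequently,
    ((hi'.and hj').mono fun y hy => ⟨Set.mem_iUnion_of_mem i' hy.1,
      Set.mem_iUnion_of_mem j' hy.2⟩).frequently⟩

theorem LineCondition.exists_vectorSpan_le_span_recessionCone [Fintype ι]
    (hS : ∀ i, IsLinearSetQ n (S i)) (hU : LineCondition (⋃ i, S i)) (hne : (⋃ i, S i).Nonempty) :
    ∃ i, (S i).Nonempty ∧
      vectorSpan ℚ (⋃ i, S i) ≤ Submodule.span ℚ (recessionCone ℚ (S i) : Set _) := by
  classical
  obtain ⟨a, ha⟩ := hne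
  let A i := AffineSubspace.mk' a (Submodule.span ℚ (recessionCone ℚ (S i) : Set _))
  have hcover : (⋃ i, S i) ⊆ ⋃ i ∈ Finset.univ.filter fun i => (S i).Nonempty, (A i : Set _) := by
    intro r hr
    simp only [Finset.mem_filter, Finset.mem_univ, true_and, Set.mem_iUnion, SetLike.mem_coe,
      exists_prop]
    rcases eq_or_ne a r with rfl | har
    · obtain ⟨i, hi⟩ := Set.mem_iUnion.1 hr
      exact ⟨i, ⟨a, hi⟩, AffineSubspace.self_mem_mk' _ _⟩
    obtain ⟨i, hi⟩ : ∃ i, ∃ᶠ y : ℚ in atTop, lineMap a r y ∈ S i := by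
      simpa using hU.frequently_atTop har ha hr
    refine ⟨i, ?_, AffineSubspace.mem_mk'.2 (Submodule.subset_span ?_)⟩
    · obtain ⟨y, hy⟩ := hi.exists
      exact ⟨_, hy⟩
    · exact (hS i).mem_recessionCone_of_frequently
        (by simpa [lineMap_apply_module', add_comm] using hi)
  obtain ⟨i, hi, hsub⟩ := hU.exists_subset_of_subset_biUnion ⟨a, ha⟩ A _ hcover
  refine ⟨i, (Finset.mem_filter.1 hi).2, ?_⟩
  simpa [A, direction_affineSpan] using AffineSubspace.direction_le (affineSpan_le.2 hsub)

theorem LineCondition.exists_affineSpan_eq [Fintype ι] (hS : ∀ i, IsLinearSetQ n (S i))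
    (hU : LineCondition (⋃ i, S i)) (hne : (⋃ i, S i).Nonempty) :
    ∃ i, affineSpan ℚ (S i) = affineSpan ℚ (⋃ i, S i) := by
  obtain ⟨i, ⟨x, hx⟩, hle⟩ := hU.exists_vectorSpan_le_span_recessionCone hS hne
  exact ⟨i, affineSpan_eq_of_subset_of_vectorSpan_le (Set.subset_iUnion S i) ⟨x, hx⟩
    (hle.trans (span_recessionCone_le_vectorSpan hx))⟩

theorem LineCondition.nonempty_inter_and_vectorSpan_le [Fintype ι] [Fintype κ]
    (hS : ∀ i, IsLinearSetQ n (S i)) (hT : ∀ j, IsLinearSetQ n (T j))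
    (hSne : (⋃ i, S i).Nonempty) (hTne : (⋃ j, T j).Nonempty)
    (hSU : LineCondition (⋃ i, S i)) (hTU : LineCondition (⋃ j, T j))
    (hAff : affineSpan ℚ (⋃ i, S i) = affineSpan ℚ (⋃ j, T j)) :
    ((⋃ i, S i) ∩ ⋃ j, T j).Nonempty ∧
      vectorSpan ℚ (⋃ i, S i) ≤ vectorSpan ℚ ((⋃ i, S i) ∩ ⋃ j, T j) := by
  set V := vectorSpan ℚ (⋃ i, S i)
  set M := vectorSpan ℚ ((⋃ i, S i) ∩ ⋃ j, T j)
  have hVT : vectorSpan ℚ (⋃ j, T j) = V := by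
    rw [← direction_affineSpan, ← hAff, direction_affineSpan]
  obtain ⟨i₀, ⟨x₀, hx₀⟩, hC⟩ := hSU.exists_vectorSpan_le_span_recessionCone hS hSne
  obtain ⟨j₀, ⟨x₁, hx₁⟩, hD⟩ := hTU.exists_vectorSpan_le_span_recessionCone hT hTne
  rw [hVT] at hD
  set C := recessionCone ℚ (S i₀)
  set D := recessionCone ℚ (T j₀)
  have hCV : Submodule.span ℚ (C : Set _) ≤ V :=
    (span_recessionCone_le_vectorSpan hx₀).trans (vectorSpan_mono ℚ (Set.subset_iUnion S i₀))
  have hDV : Submodule.span ℚ (D : Set _) ≤ V := hVT ▸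
    (span_recessionCone_le_vectorSpan hx₁).trans (vectorSpan_mono ℚ (Set.subset_iUnion T j₀))
  have hx₁₀ : x₁ - x₀ ∈ V := by
    simpa only [direction_affineSpan, vsub_eq_sub] using AffineSubspace.vsub_mem_direction
      (hAff ▸ mem_affineSpan ℚ (Set.mem_iUnion_of_mem j₀ hx₁))
      (mem_affineSpan ℚ (Set.mem_iUnion_of_mem i₀ hx₀))
  obtain ⟨w, hwC, hw⟩ := C.exists_forall_eventually_add_smul_mem
  obtain ⟨w', -, hw'⟩ := D.exists_forall_eventually_add_smul_mem
  -- A line through two points of `T j₀` along `w + c` eventually runs inside `S i₀`.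
  have key : ∀ c ∈ C, ((⋃ i, S i) ∩ ⋃ j, T j).Nonempty ∧ w + c ∈ M := by
    intro c hc
    have hδ : w + c ∈ V := hCV (add_mem (Submodule.subset_span hwC) (Submodule.subset_span hc))
    obtain ⟨N, hN₀, hN₁⟩ := ((hw' 0 (zero_mem _)).and (hw' (w + c) (hD hδ))).exists
    rw [zero_add] at hN₀
    set p := x₁ + N • w'
    have hp : p ∈ T j₀ := by simpa using hN₀ x₁ hx₁ 1 zero_le_one
    have hpδ : p + (w + c) ∈ T j₀ := by
      convert hN₁ x₁ hx₁ 1 zero_le_one using 1; module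
    obtain ⟨j, hj⟩ := hTU.exists_eventually_add_smul_mem hT (Set.mem_iUnion_of_mem _ hp)
      (Set.mem_iUnion_of_mem _ hpδ)
    have hpV : p - x₀ ∈ V := by
      convert add_mem hx₁₀ (hDV (Submodule.subset_span hN₀)) using 1; module
    have hi : ∀ᶠ t : ℚ in atTop, p + t • (w + c) ∈ S i₀ := by
      filter_upwards [hw _ (hC hpV), eventually_ge_atTop 0] with t ht ht₀
      convert C.add_mem ht (C.smul_mem ht₀ hc) x₀ hx₀ 1 zero_le_one using 1; module
    exact nonempty_and_mem_vectorSpan_of_eventually ((hi.and hj).mono fun t ht =>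
      ⟨Set.mem_iUnion_of_mem _ ht.1, Set.mem_iUnion_of_mem _ ht.2⟩)
  refine ⟨(key 0 C.zero_mem).1, hC.trans (Submodule.span_le.2 fun c hc => ?_)⟩
  simpa using M.sub_mem (key c hc).2 (key 0 C.zero_mem).2

end UnionOfLinearSets

/-- Let P = P₁ ∪ … ∪ P_k and Q = Q₁ ∪ … ∪ Q_l be nonempty, with each P_i, Q_j a
linear set, and both P and Q satisfying the line condition.  If
aff(P) = aff(Q), then aff(P_i ∩ Q_j) = aff(P) for some i, j. -/
theorem stmt5 {n k l : ℕ} (P : Fin k → Set (Fin n → ℚ)) (Q : Fin l → Set (Fin n → ℚ))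
    (hP : ∀ i, IsLinearSetQ n (P i)) (hQ : ∀ j, IsLinearSetQ n (Q j))
    (hPne : (⋃ i, P i).Nonempty) (hQne : (⋃ j, Q j).Nonempty)
    (hPline : LineCondition (⋃ i, P i)) (hQline : LineCondition (⋃ j, Q j))
    (hA : affHull (⋃ i, P i) = affHull (⋃ j, Q j)) :
    ∃ i j, affHull (P i ∩ Q j) = affHull (⋃ i, P i) := by
  have hAff : affineSpan ℚ (⋃ i, P i) = affineSpan ℚ (⋃ j, Q j) := by
    simpa only [affHull_eq_affineSpan, SetLike.coe_set_eq] using hA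
  obtain ⟨hne, hle⟩ := hPline.nonempty_inter_and_vectorSpan_le hP hQ hPne hQne hQline hAff
  have hR : (⋃ i, P i) ∩ (⋃ j, Q j) = ⋃ ij : Fin k × Fin l, P ij.1 ∩ Q ij.2 := by
    simp only [Set.iUnion_inter_iUnion, Set.iUnion_prod']
  have hRline := hPline.iUnion_inter_iUnion hP hQ hQline
  rw [hR] at hRline hne hle
  obtain ⟨⟨i, j⟩, hij⟩ := hRline.exists_affineSpan_eq
    (fun ij : Fin k × Fin l => (hP ij.1).inter (hQ ij.2)) hne
  refine ⟨i, j, ?_⟩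
  rw [affHull_eq_affineSpan, affHull_eq_affineSpan, hij,
    affineSpan_eq_of_subset_of_vectorSpan_le (hR ▸ Set.inter_subset_left) hne hle]
end

section
/- Let T ⊆ ℚ be a set with {−1, 1} ⊆ T ⊆ (−3/2, −1/2) ∪ (1/2, 3/2). Let V be a finite set of variables and let C be a finite set of triples of elements of V. Then the following are equivalent: (i) there exists s : V → {−1, 1} such that for every triple (x,y,z) ∈ C, not all of s(x), s(y), s(z) are equal; (ii) there exists s' : V → ℚ such that s'(v) ∈ T for every v ∈ V, and for every triple (x,y,z) ∈ C there exists w ∈ T with s'(x) + s'(y) + s'(z) + w = 0. -/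
/-- Correctness of the reduction from Not-All-Equal 3SAT:
for any T with {−1,1} ⊆ T ⊆ (−3/2,−1/2) ∪ (1/2,3/2), a system of NAE-triples
is satisfiable over {−1,1} iff the corresponding system of constraints
`s'(x)+s'(y)+s'(z)+w = 0`, with all values in T, is satisfiable. -/
theorem stmt9 (T : Set ℚ)
    (hT1 : ({-1, 1} : Set ℚ) ⊆ T)
    (hT2 : T ⊆ Set.Ioo (-(3 : ℚ) / 2) (-(1 : ℚ) / 2) ∪ Set.Ioo ((1 : ℚ) / 2) ((3 : ℚ) / 2))
    (V : Type) [Fintype V] (C : Finset (V × V × V)) :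
    (∃ s : V → ℚ, (∀ v, s v = -1 ∨ s v = 1) ∧
      ∀ t ∈ C, ¬ (s t.1 = s t.2.1 ∧ s t.1 = s t.2.2)) ↔
    (∃ s' : V → ℚ, (∀ v, s' v ∈ T) ∧
      ∀ t ∈ C, ∃ w ∈ T, s' t.1 + s' t.2.1 + s' t.2.2 + w = 0) := by
  have hm1 : (-1 : ℚ) ∈ T := hT1 (by left; rfl)
  have h1 : (1 : ℚ) ∈ T := hT1 (by right; rfl)
  constructor
  · rintro ⟨s, hs, hC⟩
    refine ⟨s, fun v => (hs v).elim (fun h => h ▸ hm1) (fun h => h ▸ h1), fun t ht => ?_⟩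
    have hna := hC t ht
    rcases hs t.1 with h1' | h1' <;> rcases hs t.2.1 with h2' | h2' <;>
      rcases hs t.2.2 with h3' | h3'
    · exact absurd ⟨h1'.trans h2'.symm, h1'.trans h3'.symm⟩ hna
    · exact ⟨1, h1, by rw [h1', h2', h3']; ring⟩
    · exact ⟨1, h1, by rw [h1', h2', h3']; ring⟩
    · exact ⟨-1, hm1, by rw [h1', h2', h3']; ring⟩
    · exact ⟨1, h1, by rw [h1', h2', h3']; ring⟩
    · exact ⟨-1, hm1, by rw [h1', h2', h3']; ring⟩
    · exact ⟨-1, hm1, by rw [h1', h2', h3']; ring⟩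
    · exact absurd ⟨h1'.trans h2'.symm, h1'.trans h3'.symm⟩ hna
  · rintro ⟨s', hs', hC⟩
    refine ⟨fun v => if (1:ℚ)/2 < s' v then 1 else -1, fun v => by
      dsimp only; split_ifs; exacts [Or.inr rfl, Or.inl rfl], fun t ht => ?_⟩
    obtain ⟨w, hw, hsum⟩ := hC t ht
    have key : ∀ v, ((1:ℚ)/2 < s' v ∧ s' v < 3/2) ∨ (-(3:ℚ)/2 < s' v ∧ s' v < -1/2) := by
      intro v
      rcases hT2 (hs' v) with ⟨a, b⟩ | ⟨a, b⟩
      · right; exact ⟨a, b⟩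
      · left; exact ⟨a, b⟩
    have hwrange := hT2 hw
    rintro ⟨e1, e2⟩
    by_cases h1' : (1:ℚ)/2 < s' t.1
    · simp only [if_pos h1'] at e1 e2
      by_cases h2' : (1:ℚ)/2 < s' t.2.1
      · by_cases h3' : (1:ℚ)/2 < s' t.2.2
        · have : w < -(3:ℚ)/2 := by linarith
          rcases hwrange with ⟨a, b⟩ | ⟨a, b⟩ <;> linarith
        · rw [if_neg h3'] at e2; norm_num at e2
      · rw [if_neg h2'] at e1; norm_num at e1
    · simp only [if_neg h1'] at e1 e2
      by_cases h2' : (1:ℚ)/2 < s' t.2.1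
      · rw [if_pos h2'] at e1; norm_num at e1
      · by_cases h3' : (1:ℚ)/2 < s' t.2.2
        · rw [if_pos h3'] at e2; norm_num at e2
        · rcases key t.1 with ⟨a1, b1⟩ | ⟨a1, b1⟩
          · exact absurd a1 h1'
          rcases key t.2.1 with ⟨a2, b2⟩ | ⟨a2, b2⟩
          · exact absurd a2 h2'
          rcases key t.2.2 with ⟨a3, b3⟩ | ⟨a3, b3⟩
          · exact absurd a3 h3'
          have : w > (3:ℚ)/2 := by linarith
          rcases hwrange with ⟨a, b⟩ | ⟨a, b⟩ <;> linarith
end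

section
/- Let T ⊆ ℚ be a nonempty bounded semilinear set such that T ∩ (−ε, ε) = ∅ for some rational ε > 0. Then for every rational δ > 0 there exist finitely many nonzero rationals c₁, …, c_m such that the set V = c₁·T ∩ … ∩ c_m·T satisfies either (1 ∈ V and V ⊆ (1−δ, 1+δ)) or ({−1, 1} ⊆ V and V ⊆ (−1−δ, −1+δ) ∪ (1−δ, 1+δ)). -/
/-!
Write `T = A ∪ -B` with `A, B` finite unions of intervals of positive rationals. Intersecting with
`t⁻¹ • T` for a probe `t ∈ T` keeps exactly the scales `x` with `x * t ∈ T`. A probe of almost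
maximal absolute value forces `|x| < 1 + δ`; the same argument for `T⁻¹`, where inversion swaps the
largest and smallest elements, forces `1 < |x| (1 + δ)`. Only the sign of `x` is left open.

Compare the tops of `A` and `B`. If their suprema differ, a probe from the larger one excludes
every `x` near `-1`; so does a pair of probes if the common supremum is a maximum of one of them
that is isolated from below while the other accumulates at it. In the remaining cases `A` and `B`
both reach the supremum, and because a finite union of intervals accumulating at `σ` from below
contains an interval `(l, σ)`, they share points arbitrarily close to it. If this happens at the
bottom as well (the top of `T⁻¹`), the symmetric probes `±u, ±v` keep both `1` and `-1`.
-/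

open Filter Topology Set
open scoped Pointwise

def IsFinUnionOrdConnected (S : Set ℚ) : Prop :=
  ∃ (k : ℕ) (g : Fin k → Set ℚ), (∀ i, (g i).OrdConnected) ∧ S = ⋃ i, g i

theorem ordConnected_setOf_ite (c b : ℚ) (strict : Bool) :
    {q : ℚ | if strict then c * q < b else c * q ≤ b}.OrdConnected := by
  cases strict
  · exact (convex_halfSpace_le (LinearMap.mulLeft ℚ c).isLinear b).ordConnected
  · exact (convex_halfSpace_lt (LinearMap.mulLeft ℚ c).isLinear b).ordConnected

theorem IsSemilinear1.isFinUnionOrdConnected {T : Set ℚ} (hT : IsSemilinear1 T) :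
    IsFinUnionOrdConnected T := by
  obtain ⟨k, f, hf, hT⟩ := hT
  refine ⟨k, fun i => {q | (fun _ => q) ∈ f i}, fun i => ?_, ?_⟩
  · obtain ⟨m, c, b, strict, hfi⟩ := hf i
    have hpiece : {q : ℚ | (fun _ => q) ∈ f i} =
        ⋂ j, {q | if strict j then c j 0 * q < b j else c j 0 * q ≤ b j} := by
      ext q
      simp [hfi]
    simp only [hpiece]
    exact ordConnected_iInter fun j => ordConnected_setOf_ite _ _ _
  · ext q
    simpa using congrArg (fun S => (fun _ => q) ∈ S) hT

theorem Set.OrdConnected.inv_of_zero_notMem {g : Set ℚ} (hg : g.OrdConnected) (h0 : (0 : ℚ) ∉ g) :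
    g⁻¹.OrdConnected := by
  refine ⟨fun x (hx : x⁻¹ ∈ g) y (hy : y⁻¹ ∈ g) z ⟨hxz, hzy⟩ => show z⁻¹ ∈ g from ?_⟩
  have hx0 : x ≠ 0 := by rintro rfl; simp_all
  have hy0 : y ≠ 0 := by rintro rfl; simp_all
  rcases hx0.lt_or_gt with hx0 | hx0
  · rcases hy0.lt_or_gt with hy0 | hy0
    · have hz0 : z < 0 := hzy.trans_lt hy0
      exact hg.out hy hx ⟨(inv_le_inv_of_neg hy0 hz0).2 hzy, (inv_le_inv_of_neg hz0 hx0).2 hxz⟩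
    · exact absurd (hg.out hx hy ⟨(inv_neg''.2 hx0).le, (inv_pos.2 hy0).le⟩) h0
  · have hz0 : 0 < z := hx0.trans_le hxz
    exact hg.out hy hx ⟨inv_anti₀ hz0 hzy, inv_anti₀ hx0 hxz⟩

theorem IsFinUnionOrdConnected.neg {S : Set ℚ} (hS : IsFinUnionOrdConnected S) :
    IsFinUnionOrdConnected (-S) := by
  obtain ⟨k, g, hg, rfl⟩ := hS
  exact ⟨k, fun i => -g i, fun i => (hg i).preimage_anti fun _ _ h => neg_le_neg h,
    iUnion_neg g⟩

theorem IsFinUnionOrdConnected.inv {S : Set ℚ} (hS : IsFinUnionOrdConnected S) (h0 : (0 : ℚ) ∉ S) :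
    IsFinUnionOrdConnected S⁻¹ := by
  obtain ⟨k, g, hg, rfl⟩ := hS
  exact ⟨k, fun i => (g i)⁻¹,
    fun i => (hg i).inv_of_zero_notMem fun h => h0 (mem_iUnion.2 ⟨i, h⟩), iUnion_inv g⟩

def ratNhdsLT (σ : ℝ) : Filter ℚ := comap ((↑) : ℚ → ℝ) (𝓝[<] σ)

theorem eventually_ratNhdsLT_iff {σ : ℝ} {p : ℚ → Prop} :
    (∀ᶠ q in ratNhdsLT σ, p q) ↔ ∃ l < σ, ∀ q : ℚ, l < q → (q : ℝ) < σ → p q := by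
  rw [ratNhdsLT, eventually_comap, Filter.Eventually, mem_nhdsLT_iff_exists_Ioo_subset]
  constructor
  · rintro ⟨l, hl, h⟩
    exact ⟨l, hl, fun q h1 h2 => h ⟨h1, h2⟩ q rfl⟩
  · rintro ⟨l, hl, h⟩
    exact ⟨l, hl, fun x hx q hq => h q (hq ▸ hx.1) (hq ▸ hx.2)⟩

instance (σ : ℝ) : (ratNhdsLT σ).NeBot := by
  rw [← frequently_true_iff_neBot, Filter.Frequently, eventually_ratNhdsLT_iff]
  rintro ⟨l, hl, h⟩
  obtain ⟨q, hlq, hqσ⟩ := exists_rat_btwn hl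
  exact h q hlq hqσ trivial

theorem eventually_gt_ratNhdsLT {σ l : ℝ} (hl : l < σ) : ∀ᶠ q : ℚ in ratNhdsLT σ, l < q :=
  eventually_ratNhdsLT_iff.2 ⟨l, hl, fun _ h _ => h⟩

theorem eventually_lt_ratNhdsLT (σ : ℝ) : ∀ᶠ q : ℚ in ratNhdsLT σ, (q : ℝ) < σ :=
  eventually_ratNhdsLT_iff.2 ⟨σ - 1, by linarith, fun _ _ h => h⟩

theorem Set.OrdConnected.eventually_mem_of_frequently {g : Set ℚ} (hg : g.OrdConnected) {σ : ℝ}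
    (h : ∃ᶠ q in ratNhdsLT σ, q ∈ g) : ∀ᶠ q in ratNhdsLT σ, q ∈ g := by
  obtain ⟨q₀, hq₀, hq₀σ⟩ := (h.and_eventually (eventually_lt_ratNhdsLT σ)).exists
  filter_upwards [eventually_gt_ratNhdsLT hq₀σ, eventually_lt_ratNhdsLT σ] with q hq hqσ
  obtain ⟨q', hq', hqq'⟩ := (h.and_eventually (eventually_gt_ratNhdsLT hqσ)).exists
  exact hg.out hq₀ hq' ⟨by exact_mod_cast hq.le, by exact_mod_cast hqq'.le⟩

theorem IsFinUnionOrdConnected.eventually_mem_of_frequently {S : Set ℚ}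
    (hS : IsFinUnionOrdConnected S) {σ : ℝ} (h : ∃ᶠ q in ratNhdsLT σ, q ∈ S) :
    ∀ᶠ q in ratNhdsLT σ, q ∈ S := by
  obtain ⟨k, g, hg, rfl⟩ := hS
  simp only [mem_iUnion, frequently_exists] at h ⊢
  obtain ⟨i, hi⟩ := h
  exact ((hg i).eventually_mem_of_frequently hi).mono fun q hq => ⟨i, hq⟩

theorem BoundedSet.neg {T : Set ℚ} (h : BoundedSet T) : BoundedSet (-T) := by
  obtain ⟨a, ha⟩ := h
  exact ⟨a, fun t ht => by have := ha ht; constructor <;> linarith [this.1, this.2]⟩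

theorem boundedSet_inv_of_le_abs {T : Set ℚ} {ε : ℚ} (hε : 0 < ε) (h : ∀ t ∈ T, ε ≤ |t|) :
    BoundedSet T⁻¹ := by
  refine ⟨ε⁻¹, fun t (ht : t⁻¹ ∈ T) => abs_le.1 ?_⟩
  have hεt := h _ ht
  rw [abs_inv] at hεt
  have ht0 : 0 < |t| := abs_pos.2 fun h0 => by simp [h0] at hεt; linarith
  exact (le_inv_comm₀ hε ht0).1 hεt

theorem exists_isLUB_cast {S : Set ℚ} (hne : S.Nonempty) (hbdd : BoundedSet S) :
    ∃ σ : ℝ, IsLUB ((↑) '' S) σ := by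
  obtain ⟨a, ha⟩ := hbdd
  exact ⟨_, isLUB_csSup (hne.image _) ⟨a, by rintro _ ⟨t, ht, rfl⟩; exact_mod_cast (ha ht).2⟩⟩

theorem frequently_ratNhdsLT_of_isLUB {S : Set ℚ} {σ : ℝ} (hσ : IsLUB ((↑) '' S) σ)
    (hnot : σ ∉ ((↑) '' S : Set ℝ)) : ∃ᶠ q in ratNhdsLT σ, q ∈ S := by
  rw [Filter.Frequently, eventually_ratNhdsLT_iff]
  rintro ⟨l, hl, h⟩
  obtain ⟨_, ⟨q, hq, rfl⟩, hlq, hqσ⟩ := hσ.exists_between hl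
  exact h q hlq (hqσ.lt_of_ne fun he => hnot ⟨q, hq, he⟩) hq

/-- The window `(1 + d)⁻¹ < |x| < 1 + d` is invariant under `x ↦ x⁻¹`, so that
`ExcludesNegOne.of_inv` holds. -/
def ExcludesNegOne (T : Set ℚ) : Prop :=
  ∃ d : ℚ, 0 < d ∧ ∃ t₁ ∈ T, ∃ t₂ ∈ T, ∀ x : ℚ, x < 0 → 1 < |x| * (1 + d) → |x| < 1 + d →
    ¬(x * t₁ ∈ T ∧ x * t₂ ∈ T)

theorem ExcludesNegOne.neg {T : Set ℚ} (h : ExcludesNegOne T) : ExcludesNegOne (-T) := by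
  obtain ⟨d, hd, t₁, ht₁, t₂, ht₂, h⟩ := h
  refine ⟨d, hd, -t₁, by simpa using ht₁, -t₂, by simpa using ht₂, fun x hx h₁ h₂ hxt => ?_⟩
  exact h x hx h₁ h₂ (by simpa using hxt)

theorem ExcludesNegOne.of_inv {T : Set ℚ} (h : ExcludesNegOne T⁻¹) : ExcludesNegOne T := by
  obtain ⟨d, hd, t₁, ht₁, t₂, ht₂, h⟩ := h
  refine ⟨d, hd, t₁⁻¹, ht₁, t₂⁻¹, ht₂, fun x hx h₁ h₂ hxt => ?_⟩
  have hx' : 0 < |x| := abs_pos.2 hx.ne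
  refine h x⁻¹ (inv_lt_zero.2 hx) ?_ ?_ (by simpa [mul_inv, mul_comm] using hxt)
  · rw [abs_inv, inv_mul_eq_div, one_lt_div hx']
    exact h₂
  · rw [abs_inv, inv_lt_iff_one_lt_mul₀ hx', mul_comm]
    exact h₁

theorem lt_mul_of_one_lt_mul_one_add {l r y : ℚ} (hr : 0 < r) (hlr : l < r)
    (h : 1 < y * (1 + (r - l) / r)) : l < y * r := by
  have h' : r < y * (2 * r - l) := by
    rw [show 1 + (r - l) / r = (2 * r - l) / r by field_simp; ring, mul_div_assoc', lt_div_iff₀ hr,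
      one_mul] at h
    exact h
  nlinarith [sq_nonneg (r - l)]

theorem excludesNegOne_of_forall_neg_le {T : Set ℚ} {r l : ℚ} (hr : r ∈ T) (hlr : l < r)
    (hl : ∀ q ∈ -T, q ≤ l) : ExcludesNegOne T := by
  have hr0 : 0 < r := by linarith [hl (-r) (by simpa using hr)]
  refine ⟨(r - l) / r, div_pos (by linarith) hr0, r, hr, r, hr, fun x hx h₁ _ ⟨hxr, _⟩ => ?_⟩
  have hle := hl (-(x * r)) (by simpa using hxr)
  have hlt := lt_mul_of_one_lt_mul_one_add hr0 hlr h₁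
  rw [abs_of_neg hx] at hlt
  linarith

theorem excludesNegOne_of_forall_lt {T : Set ℚ} {w s l : ℚ} (hw : w ∈ T) (hs : s ∈ -T)
    (hs0 : 0 < s) (hls : l < s) (hlt : ∀ q ∈ -T, q < w) (hle : ∀ q ∈ T, q < w → q ≤ l) :
    ExcludesNegOne T := by
  have hw0 : 0 < w := hs0.trans (hlt s hs)
  refine ⟨(s - l) / s, div_pos (by linarith) hs0, w, hw, -s, hs, fun x hx h₁ _ ⟨hxw, hxs⟩ => ?_⟩
  rw [abs_of_neg hx] at h₁
  have hx1 : -x < 1 := by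
    have := hlt (-(x * w)) (by simpa using hxw)
    nlinarith
  have hxs' : -x * s ≤ l := hle _ (by simpa using hxs)
    (by nlinarith [hlt s hs])
  linarith [lt_mul_of_one_lt_mul_one_add hs0 hls h₁]

theorem excludesNegOne_of_isLUB_lt {T : Set ℚ} {σ τ : ℝ} (hσ : IsLUB ((↑) '' T) σ)
    (hτ : IsLUB ((↑) '' (-T)) τ) (h : τ < σ) : ExcludesNegOne T := by
  obtain ⟨l, hτl, hlσ⟩ := exists_rat_btwn h
  obtain ⟨_, ⟨r, hr, rfl⟩, hlr, -⟩ := hσ.exists_between hlσ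
  exact excludesNegOne_of_forall_neg_le hr (by exact_mod_cast hlr) fun q hq => by
    exact_mod_cast (hτ.1 ⟨q, hq, rfl⟩).trans hτl.le

def IsNearTop (T : Set ℚ) (γ w : ℚ) : Prop := ∀ t ∈ T, |t| < |w| * (1 + γ)

def HasSymmetricTop (T : Set ℚ) : Prop := ∀ γ : ℚ, 0 < γ → ∃ w ∈ T, -w ∈ T ∧ IsNearTop T γ w

theorem HasSymmetricTop.of_neg {T : Set ℚ} (h : HasSymmetricTop (-T)) : HasSymmetricTop T := by
  intro γ hγ
  obtain ⟨w, hw, hw', hnear⟩ := h γ hγ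
  exact ⟨w, by simpa using hw', hw, fun t ht => by simpa using hnear (-t) (by simpa using ht)⟩

theorem abs_le_of_isLUB {T : Set ℚ} {σ : ℝ} (hσ : IsLUB ((↑) '' T) σ)
    (hσ' : IsLUB ((↑) '' (-T)) σ) {t : ℚ} (ht : t ∈ T) : |(t : ℝ)| ≤ σ :=
  abs_le'.2 ⟨hσ.1 ⟨t, ht, rfl⟩, by simpa using hσ'.1 ⟨-t, by simpa using ht, rfl⟩⟩

theorem hasSymmetricTop_of_eventually {T : Set ℚ} {σ : ℝ} (hσ : IsLUB ((↑) '' T) σ)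
    (hσ' : IsLUB ((↑) '' (-T)) σ) (hσ0 : 0 < σ) (hfill : ∀ᶠ q in ratNhdsLT σ, q ∈ T)
    (hfill' : ∀ᶠ q in ratNhdsLT σ, q ∈ -T) : HasSymmetricTop T := by
  intro γ hγ
  have hγ' : (0 : ℝ) < γ := by exact_mod_cast hγ
  have hlt : σ / (1 + γ) < σ := div_lt_self hσ0 (by linarith)
  obtain ⟨w, hwT, hwT', hw⟩ := (hfill.and (hfill'.and (eventually_gt_ratNhdsLT hlt))).exists
  refine ⟨w, hwT, hwT', fun t ht => ?_⟩
  have hw0 : (0 : ℝ) < w := (div_pos hσ0 (by linarith)).trans hw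
  have hσw : σ < w * (1 + γ) := (div_lt_iff₀ (by linarith)).1 hw
  have : |(t : ℝ)| < |(w : ℝ)| * (1 + γ) := by
    rw [abs_of_pos hw0]
    linarith [abs_le_of_isLUB hσ hσ' ht]
  exact_mod_cast this

theorem excludesNegOne_or_hasSymmetricTop_of_mem {T : Set ℚ} (hT : IsFinUnionOrdConnected T)
    {σ : ℝ} (hσ : IsLUB ((↑) '' T) σ) (hσ' : IsLUB ((↑) '' (-T)) σ) (hσ0 : 0 < σ) {w : ℚ}
    (hw : w ∈ T) (hwσ : (w : ℝ) = σ) : ExcludesNegOne T ∨ HasSymmetricTop T := by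
  by_cases hmem : σ ∈ ((↑) '' (-T) : Set ℝ)
  · obtain ⟨w', hw', hw'σ⟩ := hmem
    obtain rfl : w = w' := by exact_mod_cast hwσ.trans hw'σ.symm
    have hw0 : (0 : ℝ) < w := hwσ ▸ hσ0
    refine Or.inr fun γ hγ => ⟨w, hw, hw', fun t ht => ?_⟩
    have : |(t : ℝ)| < |(w : ℝ)| * (1 + γ) := by
      rw [abs_of_pos hw0]
      nlinarith [abs_le_of_isLUB hσ hσ' ht, (by exact_mod_cast hγ : (0 : ℝ) < γ)]
    exact_mod_cast this
  have hneg := hT.neg.eventually_mem_of_frequently (frequently_ratNhdsLT_of_isLUB hσ' hmem)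
  by_cases hfreq : ∃ᶠ q in ratNhdsLT σ, q ∈ T
  · exact Or.inr <| hasSymmetricTop_of_eventually hσ hσ' hσ0
      (hT.eventually_mem_of_frequently hfreq) hneg
  -- `T` has a gap below its maximum `w`, while `-T` accumulates at `w` from below.
  rw [not_frequently, eventually_ratNhdsLT_iff] at hfreq
  obtain ⟨l₀, hl₀, hgap⟩ := hfreq
  obtain ⟨l, hl₀l, hlσ⟩ := exists_rat_btwn (max_lt hl₀ hσ0)
  obtain ⟨s, hs, hls⟩ := (hneg.and (eventually_gt_ratNhdsLT hlσ)).exists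
  have hl0 : (0 : ℝ) < l := (le_max_right _ _).trans_lt hl₀l
  refine Or.inl <| excludesNegOne_of_forall_lt hw hs (by exact_mod_cast hl0.trans hls)
    (by exact_mod_cast hls) (fun q hq => ?_) (fun q hq hqw => ?_)
  · have hqσ : (q : ℝ) < σ :=
      (hσ'.1 ⟨q, hq, rfl⟩).lt_of_ne fun h => hmem ⟨q, hq, h⟩
    exact_mod_cast hwσ ▸ hqσ
  · by_contra! hlq
    exact hgap q ((le_max_left _ _).trans_lt (hl₀l.trans (by exact_mod_cast hlq)))
      (hwσ ▸ by exact_mod_cast hqw) hq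

theorem excludesNegOne_or_hasSymmetricTop_of_isLUB {T : Set ℚ} (hT : IsFinUnionOrdConnected T)
    (h0 : (0 : ℚ) ∉ T) (hne : T.Nonempty) {σ : ℝ} (hσ : IsLUB ((↑) '' T) σ)
    (hσ' : IsLUB ((↑) '' (-T)) σ) : ExcludesNegOne T ∨ HasSymmetricTop T := by
  have hσ0 : 0 < σ := by
    obtain ⟨t, ht⟩ := hne
    have ht0 : (t : ℝ) ≠ 0 := by exact_mod_cast ne_of_mem_of_not_mem ht h0
    exact (abs_pos.2 ht0).trans_le (abs_le_of_isLUB hσ hσ' ht)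
  by_cases hmem : σ ∈ ((↑) '' T : Set ℝ)
  · obtain ⟨w, hw, hwσ⟩ := hmem
    exact excludesNegOne_or_hasSymmetricTop_of_mem hT hσ hσ' hσ0 hw hwσ
  by_cases hmem' : σ ∈ ((↑) '' (-T) : Set ℝ)
  · obtain ⟨w, hw, hwσ⟩ := hmem'
    rw [← neg_neg T] at hσ
    exact (excludesNegOne_or_hasSymmetricTop_of_mem hT.neg hσ' hσ hσ0 hw hwσ).imp
      (fun h => neg_neg T ▸ h.neg) HasSymmetricTop.of_neg
  exact Or.inr <| hasSymmetricTop_of_eventually hσ hσ' hσ0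
    (hT.eventually_mem_of_frequently (frequently_ratNhdsLT_of_isLUB hσ hmem))
    (hT.neg.eventually_mem_of_frequently (frequently_ratNhdsLT_of_isLUB hσ' hmem'))

theorem excludesNegOne_or_hasSymmetricTop {T : Set ℚ} (hT : IsFinUnionOrdConnected T)
    (h0 : (0 : ℚ) ∉ T) (hne : T.Nonempty) (hbdd : BoundedSet T) :
    ExcludesNegOne T ∨ HasSymmetricTop T := by
  obtain ⟨σ, hσ⟩ := exists_isLUB_cast hne hbdd
  obtain ⟨τ, hτ⟩ := exists_isLUB_cast hne.neg hbdd.neg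
  rcases lt_trichotomy τ σ with h | rfl | h
  · exact Or.inl (excludesNegOne_of_isLUB_lt hσ hτ h)
  · exact excludesNegOne_or_hasSymmetricTop_of_isLUB hT h0 hne hσ hτ
  · rw [← neg_neg T] at hσ
    exact Or.inl (neg_neg T ▸ (excludesNegOne_of_isLUB_lt hτ hσ h).neg)

theorem exists_isNearTop {T : Set ℚ} (hne : T.Nonempty) (hbdd : BoundedSet T) (h0 : (0 : ℚ) ∉ T)
    {γ : ℚ} (hγ : 0 < γ) : ∃ u ∈ T, IsNearTop T γ u := by
  have hbdd' : BoundedSet (abs '' T) := by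
    obtain ⟨a, ha⟩ := hbdd
    refine ⟨a, ?_⟩
    rintro _ ⟨t, ht, rfl⟩
    exact ⟨by linarith [abs_nonneg t, (ha ht).1, (ha ht).2], abs_le.2 (ha ht)⟩
  obtain ⟨M, hM⟩ := exists_isLUB_cast (hne.image _) hbdd'
  have hM0 : 0 < M := by
    obtain ⟨t, ht⟩ := hne
    have ht0 : (0 : ℝ) < |t| := by exact_mod_cast abs_pos.2 (ne_of_mem_of_not_mem ht h0)
    exact ht0.trans_le (hM.1 ⟨|t|, ⟨t, ht, rfl⟩, rfl⟩)
  have hγ' : (0 : ℝ) < γ := by exact_mod_cast hγ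
  obtain ⟨_, ⟨_, ⟨u, hu, rfl⟩, rfl⟩, hMu, -⟩ :=
    hM.exists_between (div_lt_self hM0 (by linarith : (1 : ℝ) < 1 + γ))
  refine ⟨u, hu, fun t ht => ?_⟩
  have htM : ((|t| : ℚ) : ℝ) ≤ M := hM.1 ⟨|t|, ⟨t, ht, rfl⟩, rfl⟩
  have hMu' : M < ((|u| : ℚ) : ℝ) * (1 + γ) := (div_lt_iff₀ (by linarith)).1 hMu
  exact_mod_cast htM.trans_lt hMu'

theorem IsNearTop.abs_lt {T : Set ℚ} {γ u x : ℚ} (hu : IsNearTop T γ u)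
    (hx : x * u ∈ T) : |x| < 1 + γ := by
  have h := hu _ hx
  rw [abs_mul, mul_comm |u|] at h
  exact lt_of_mul_lt_mul_right h (abs_nonneg u)

theorem IsNearTop.one_lt_abs_mul {T : Set ℚ} (h0 : (0 : ℚ) ∉ T) {γ v x : ℚ}
    (hv : IsNearTop T⁻¹ γ v) (hx : x * v⁻¹ ∈ T) : 1 < |x| * (1 + γ) := by
  have hx0 : x ≠ 0 := by rintro rfl; exact h0 (by simpa using hx)
  have h := hv.abs_lt (x := x⁻¹) (by simpa [mul_inv, mul_comm] using hx)
  rwa [abs_inv, inv_lt_iff_one_lt_mul₀ (abs_pos.2 hx0), mul_comm] at h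

theorem mem_iInter_scaleSet_inv {T : Set ℚ} {m : ℕ} {p : Fin m → ℚ} (hp : ∀ i, p i ≠ 0) {x : ℚ} :
    x ∈ ⋂ i, scaleSet (p i)⁻¹ T ↔ ∀ i, x * p i ∈ T := by
  simp only [mem_iInter, scaleSet, mem_image]
  refine forall_congr' fun i => ⟨?_, fun h => ⟨x * p i, h, by field_simp [hp i]⟩⟩
  rintro ⟨t, ht, rfl⟩
  rwa [mul_right_comm, inv_mul_cancel₀ (hp i), one_mul]

theorem exists_iInter_scaleSet_subset_Ioo {T : Set ℚ} (hE : ExcludesNegOne T) (h0 : (0 : ℚ) ∉ T)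
    (hu : ∀ γ : ℚ, 0 < γ → ∃ u ∈ T, IsNearTop T γ u)
    (hv : ∀ γ : ℚ, 0 < γ → ∃ v ∈ T⁻¹, IsNearTop T⁻¹ γ v) {δ : ℚ} (hδ : 0 < δ) :
    ∃ (m : ℕ) (c : Fin m → ℚ), (∀ i, c i ≠ 0) ∧
      (1 : ℚ) ∈ ⋂ i, scaleSet (c i) T ∧ (⋂ i, scaleSet (c i) T) ⊆ Ioo (1 - δ) (1 + δ) := by
  obtain ⟨d, hd, t₁, ht₁, t₂, ht₂, hE⟩ := hE
  obtain ⟨u, hu, hnu⟩ := hu (min d δ) (lt_min hd hδ)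
  obtain ⟨v, hv, hnv⟩ := hv (min d δ) (lt_min hd hδ)
  set p : Fin 4 → ℚ := ![u, v⁻¹, t₁, t₂]
  have hpT : ∀ i, p i ∈ T := by
    simpa [Fin.forall_fin_succ, p, hu, ht₁, ht₂] using hv
  have hp0 : ∀ i, p i ≠ 0 := fun i h => h0 (h ▸ hpT i)
  refine ⟨4, fun i => (p i)⁻¹, fun i => inv_ne_zero (hp0 i),
    (mem_iInter_scaleSet_inv hp0).2 (by simpa using hpT), fun x hx => ?_⟩
  rw [mem_iInter_scaleSet_inv hp0] at hx
  have hlt := hnu.abs_lt (hx 0)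
  have hgt := hnv.one_lt_abs_mul h0 (hx 1)
  have hmin := min_le_left d δ
  have hmin' := min_le_right d δ
  have hx0 : 0 < x := by
    by_contra! hx0
    rcases hx0.lt_or_eq with hneg | rfl
    · exact hE x hneg (by nlinarith [abs_nonneg x]) (by linarith) ⟨hx 2, hx 3⟩
    · norm_num at hgt
  rw [abs_of_pos hx0] at hlt hgt
  constructor <;> nlinarith

theorem exists_iInter_scaleSet_subset_Ioo_union {T : Set ℚ} (hS : HasSymmetricTop T)
    (hS' : HasSymmetricTop T⁻¹) (h0 : (0 : ℚ) ∉ T) {δ : ℚ} (hδ : 0 < δ) :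
    ∃ (m : ℕ) (c : Fin m → ℚ), (∀ i, c i ≠ 0) ∧
      ({-1, 1} : Set ℚ) ⊆ ⋂ i, scaleSet (c i) T ∧
      (⋂ i, scaleSet (c i) T) ⊆ Ioo (-1 - δ) (-1 + δ) ∪ Ioo (1 - δ) (1 + δ) := by
  obtain ⟨u, hu, hu', hnu⟩ := hS δ hδ
  obtain ⟨v, hv, hv', hnv⟩ := hS' δ hδ
  rw [Set.mem_inv] at hv hv'
  set p : Fin 4 → ℚ := ![u, -u, v⁻¹, -v⁻¹]
  have hpT : ∀ i, p i ∈ T := by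
    simp only [Fin.forall_fin_succ, p]
    simp_all
  have hp0 : ∀ i, p i ≠ 0 := fun i h => h0 (h ▸ hpT i)
  refine ⟨4, fun i => (p i)⁻¹, fun i => inv_ne_zero (hp0 i), ?_, fun x hx => ?_⟩
  · simp only [insert_subset_iff, singleton_subset_iff, mem_iInter_scaleSet_inv hp0]
    simp_all [Fin.forall_fin_succ, p]
  rw [mem_iInter_scaleSet_inv hp0] at hx
  have hlt := hnu.abs_lt (hx 0)
  have hgt := hnv.one_lt_abs_mul h0 (hx 2)
  rcases lt_trichotomy x 0 with hx0 | rfl | hx0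
  · rw [abs_of_neg hx0] at hlt hgt
    left
    constructor <;> nlinarith
  · norm_num at hgt
  · rw [abs_of_pos hx0] at hlt hgt
    right
    constructor <;> nlinarith

/-- Let T ⊆ ℚ be a nonempty bounded semilinear set with T ∩ (−ε,ε) = ∅ for some
rational ε > 0.  Then for every rational δ > 0 there are finitely many nonzero
rationals c₁, …, c_m such that V = c₁·T ∩ … ∩ c_m·T satisfies either
(1 ∈ V and V ⊆ (1−δ,1+δ)) or ({−1,1} ⊆ V and V ⊆ (−1−δ,−1+δ) ∪ (1−δ,1+δ)). -/
theorem stmt10 (T : Set ℚ) (hT : IsSemilinear1 T) (hne : T.Nonempty)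
    (hb : BoundedSet T)
    (ε : ℚ) (hε : 0 < ε) (hdisj : T ∩ Set.Ioo (-ε) ε = ∅)
    (δ : ℚ) (hδ : 0 < δ) :
    ∃ (m : ℕ) (c : Fin m → ℚ), (∀ i, c i ≠ 0) ∧
      (((1 : ℚ) ∈ ⋂ i, scaleSet (c i) T ∧
          (⋂ i, scaleSet (c i) T) ⊆ Set.Ioo (1 - δ) (1 + δ)) ∨
       (({-1, 1} : Set ℚ) ⊆ ⋂ i, scaleSet (c i) T ∧
          (⋂ i, scaleSet (c i) T) ⊆
            Set.Ioo (-1 - δ) (-1 + δ) ∪ Set.Ioo (1 - δ) (1 + δ))) := by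
  have hε' : ∀ t ∈ T, ε ≤ |t| := fun t ht =>
    not_lt.1 fun h => (eq_empty_iff_forall_notMem.1 hdisj) t ⟨ht, abs_lt.1 h⟩
  have h0 : (0 : ℚ) ∉ T := fun h => by linarith [hε' 0 h, abs_zero (α := ℚ)]
  have h0' : (0 : ℚ) ∉ T⁻¹ := by simpa using h0
  have hb' := boundedSet_inv_of_le_abs hε hε'
  have hS := hT.isFinUnionOrdConnected
  have hu := fun γ (hγ : 0 < γ) => exists_isNearTop hne hb h0 hγ
  have hv := fun γ (hγ : 0 < γ) => exists_isNearTop hne.inv hb' h0' hγ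
  rcases excludesNegOne_or_hasSymmetricTop hS h0 hne hb with hE | hsym
  · obtain ⟨m, c, hc, hV⟩ := exists_iInter_scaleSet_subset_Ioo hE h0 hu hv hδ
    exact ⟨m, c, hc, Or.inl hV⟩
  rcases excludesNegOne_or_hasSymmetricTop (hS.inv h0) h0' hne.inv hb' with hE | hsym'
  · obtain ⟨m, c, hc, hV⟩ := exists_iInter_scaleSet_subset_Ioo hE.of_inv h0 hu hv hδ
    exact ⟨m, c, hc, Or.inl hV⟩
  · obtain ⟨m, c, hc, hV⟩ := exists_iInter_scaleSet_subset_Ioo_union hsym hsym' h0 hδ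
    exact ⟨m, c, hc, Or.inr hV⟩
end

section
/- Let k ≥ 1 and let R ⊆ ℚ^k be a nonempty relation that does not contain the all-zero tuple. Then there exist an index i ∈ {1,…,k} and a set Z ⊆ {1,…,k} with i ∉ Z such that the unary relation U = {x ∈ ℚ | there exists v ∈ R with v_i = x and v_j = 0 for all j ∈ Z} is nonempty and does not contain 0. -/
/-- From any nonempty relation R ⊆ ℚ^k (k ≥ 1) that does not contain the
all-zero tuple, one can obtain, by fixing some coordinates to 0 and projecting
onto one remaining coordinate, a nonempty unary relation not containing 0. -/
theorem stmt11 {k : ℕ} (hk : 1 ≤ k) (R : Set (Fin k → ℚ)) (hne : R.Nonempty)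
    (h0 : (fun _ => (0 : ℚ)) ∉ R) :
    ∃ (i : Fin k) (Z : Finset (Fin k)), i ∉ Z ∧
      {x : ℚ | ∃ v ∈ R, v i = x ∧ ∀ j ∈ Z, v j = 0}.Nonempty ∧
      (0 : ℚ) ∉ {x : ℚ | ∃ v ∈ R, v i = x ∧ ∀ j ∈ Z, v j = 0} := by
  classical
  set f : (Fin k → ℚ) → ℕ := fun v => (Finset.univ.filter (fun j => v j = 0)).card with hf
  set S : Set ℕ := f '' R with hS
  have hSne : S.Nonempty := hne.image f
  have hSbdd : BddAbove S := by
    refine ⟨k, fun n hn => ?_⟩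
    obtain ⟨v, _, rfl⟩ := hn
    calc f v ≤ Finset.univ.card := Finset.card_filter_le _ _
    _ = k := Finset.card_univ.trans (Fintype.card_fin k)
  have hmem : sSup S ∈ S := Nat.sSup_mem hSne hSbdd
  obtain ⟨v, hvR, hvf⟩ := hmem
  -- v is not identically zero
  have hvne : ∃ i, v i ≠ 0 := by
    by_contra h
    push_neg at h
    apply h0
    have : v = fun _ => (0 : ℚ) := funext h
    rwa [this] at hvR
  obtain ⟨i, hi⟩ := hvne
  refine ⟨i, Finset.univ.filter (fun j => v j = 0), ?_, ?_, ?_⟩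
  · simp [hi]
  · exact ⟨v i, v, hvR, rfl, fun j hj => (Finset.mem_filter.mp hj).2⟩
  · rintro ⟨w, hwR, hwi, hwz⟩
    have hle : f w ≤ sSup S := le_csSup hSbdd ⟨w, hwR, rfl⟩
    have hlt : f v < f w := by
      apply Finset.card_lt_card
      constructor
      · intro j hj
        simp only [Finset.mem_filter, Finset.mem_univ, true_and] at hj ⊢
        exact hwz j (by simp [hj])
      · intro hsub
        have := hsub (by simp [hwi] : i ∈ Finset.univ.filter (fun j => w j = 0))
        simp only [Finset.mem_filter] at this
        exact hi this.2
    omega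
end

section
/- Let φ be a finite conjunction of linear inequalities in n variables with rational coefficients, each of the form c₁x₁+…+cₙxₙ ⋈ b with ⋈ ∈ {≤, <, ≥, >}, such that every inequality in φ with nonzero constant term b is satisfied by the zero vector. Let S ⊆ ℚ^n be the solution set of φ and let T ⊆ ℚ^n be the solution set of the conjunction of those inequalities in φ whose constant term is zero. Then cone(S) = T. -/
/-- The comparison relation of a linear inequality: ≤, <, ≥, or >. -/
inductive IneqRel where
  | le | lt | ge | gt

/-- `r.holds s t` means `s ⋈ t` where ⋈ is the comparison `r`. -/
def IneqRel.holds : IneqRel → ℚ → ℚ → Prop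
  | .le, s, t => s ≤ t
  | .lt, s, t => s < t
  | .ge, s, t => t ≤ s
  | .gt, s, t => t < s

/-- cone(R) = {λ•x | λ ∈ ℚ, λ > 0, x ∈ R}. -/
def coneOf {n : ℕ} (R : Set (Fin n → ℚ)) : Set (Fin n → ℚ) :=
  {y | ∃ (l : ℚ) (x : Fin n → ℚ), 0 < l ∧ x ∈ R ∧ y = l • x}

lemma holds_smul (r : IneqRel) (s l : ℚ) (hl : 0 < l) (h : r.holds s 0) :
    r.holds (l * s) 0 := by
  cases r <;> simp [IneqRel.holds] at h ⊢ <;> nlinarith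

/-- Let φ be a finite conjunction of linear inequalities such that every
inequality with nonzero constant term is satisfied by the zero vector.  Let S
be the solution set of φ and T the solution set of the homogeneous
inequalities of φ.  Then cone(S) = T. -/
theorem stmt12 {n m : ℕ} (c : Fin m → Fin n → ℚ) (b : Fin m → ℚ)
    (rel : Fin m → IneqRel)
    (h0 : ∀ i, b i ≠ 0 → (rel i).holds (∑ j, c i j * (0 : ℚ)) (b i)) :
    coneOf {x : Fin n → ℚ | ∀ i, (rel i).holds (∑ j, c i j * x j) (b i)} =
      {x : Fin n → ℚ | ∀ i, b i = 0 → (rel i).holds (∑ j, c i j * x j) (b i)} := by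
  ext y
  simp only [coneOf, Set.mem_setOf_eq]
  constructor
  · rintro ⟨l, x, hl, hx, rfl⟩ i hbi
    have hs := hx i
    rw [hbi] at hs ⊢
    have hsum : ∑ j, c i j * (l • x) j = l * ∑ j, c i j * x j := by
      rw [Finset.mul_sum]; apply Finset.sum_congr rfl; intro j _
      simp [Pi.smul_apply, smul_eq_mul]; ring
    rw [hsum]
    exact holds_smul _ _ _ hl hs
  · intro hy
    set f : Fin m → ℚ := fun i => if b i = 0 then 1 else |b i| / (|∑ j, c i j * y j| + 1) with hf
    have hfpos : ∀ i, 0 < f i := by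
      intro i
      by_cases hbi : b i = 0 <;> simp [hf, hbi]
      positivity
    set sset := insert (1:ℚ) (Finset.image f Finset.univ) with hsset
    have hne : sset.Nonempty := ⟨1, Finset.mem_insert_self _ _⟩
    set l := sset.min' hne with hl
    have hlpos : 0 < l := by
      have hmem : sset.min' hne ∈ insert (1:ℚ) (Finset.image f Finset.univ) := sset.min'_mem hne
      rcases Finset.mem_insert.mp hmem with h | h
      · simp only [hl, h]; norm_num
      · rcases Finset.mem_image.mp h with ⟨i, _, hi⟩
        rw [hl, ← hi]; exact hfpos i
    refine ⟨l⁻¹, l • y, by positivity, ?_, by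
      funext j; simp [smul_smul, inv_mul_cancel₀ hlpos.ne', ← mul_assoc]⟩
    intro i
    have hsum : ∑ j, c i j * (l • y) j = l * ∑ j, c i j * y j := by
      rw [Finset.mul_sum]; apply Finset.sum_congr rfl; intro j _
      simp [Pi.smul_apply, smul_eq_mul]; ring
    show (rel i).holds _ _
    rw [hsum]
    by_cases hbi : b i = 0
    · rw [hbi]
      exact holds_smul _ _ _ hlpos (hbi ▸ hy i hbi)
    · have hb := h0 i hbi
      simp only [mul_zero, Finset.sum_const_zero] at hb
      have hle : l ≤ f i := sset.min'_le _ (by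
        rw [hsset]; exact Finset.mem_insert_of_mem (Finset.mem_image_of_mem f (Finset.mem_univ i)))
      set s := ∑ j, c i j * y j with hsdef
      have hpos1 : (0:ℚ) < |s| + 1 := by positivity
      have h1 : l * (|s| + 1) ≤ |b i| := by
        rw [hf] at hle; simp only [hbi, if_false] at hle
        calc l * (|s| + 1) ≤ (|b i| / (|s| + 1)) * (|s| + 1) := by nlinarith
          _ = |b i| := div_mul_cancel₀ _ hpos1.ne'
      have habs : |l * s| < |b i| := by
        rw [abs_mul, abs_of_pos hlpos]
        nlinarith [abs_nonneg s]
      rcases abs_lt.mp habs with ⟨hlo, hhi⟩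
      cases hr : rel i <;> rw [hr] at hb <;>
        simp only [IneqRel.holds] at hb ⊢ <;>
        rcases abs_cases (b i) with ⟨he, _⟩ | ⟨he, _⟩ <;>
        first
        | linarith
        | (exfalso; rcases lt_or_gt_of_ne hbi with h' | h' <;> linarith)
end

section
/- Let R ⊆ ℚ^n be a semilinear set such that for every v ∈ ℚ^n, if y•v ∈ R for some rational y > 0, then there exists a rational ε > 0 such that y•v ∈ R for all rational y with 0 < y < ε. Then cone(R) is a finite union of sets, each of which is the solution set of a finite conjunction of homogeneous linear inequalities (each of the form c₁x₁+…+cₙxₙ ≥ 0 or c₁x₁+…+cₙxₙ > 0 with rational coefficients). -/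
/-- A homogeneous linear set: the solution set of a finite conjunction of
homogeneous linear inequalities `c₁x₁+…+cₙxₙ ≥ 0` or `c₁x₁+…+cₙxₙ > 0`. -/
def IsHomLinearSet (n : ℕ) (S : Set (Fin n → ℚ)) : Prop :=
  ∃ (m : ℕ) (c : Fin m → Fin n → ℚ) (strict : Fin m → Bool),
    S = {x | ∀ i, if strict i then (0 : ℚ) < ∑ j, c i j * x j
                  else (0 : ℚ) ≤ ∑ j, c i j * x j}

def PosOrNonneg {α : Type*} [Zero α] [Preorder α] (strict : Bool) (t : α) : Prop :=
  if strict then 0 < t else 0 ≤ t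

namespace PosOrNonneg

section Preorder

variable {α : Type*} [Zero α] [Preorder α] {s s' : Bool} {t t' : α}

theorem of_pos (ht : 0 < t) : PosOrNonneg s t := by
  cases s
  exacts [ht.le, ht]

theorem mono (h : PosOrNonneg s t) (htt' : t ≤ t') : PosOrNonneg s t' := by
  cases s
  exacts [le_trans (α := α) h htt', lt_of_lt_of_le (α := α) h htt']

theorem of_or_left (h : PosOrNonneg (s || s') t) : PosOrNonneg s t := by
  cases s <;> cases s'
  exacts [h, le_of_lt (α := α) h, h, h]

theorem of_or_right (h : PosOrNonneg (s || s') t) : PosOrNonneg s' t :=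
  of_or_left (by rwa [Bool.or_comm])

end Preorder

variable {𝕜 : Type*} [Field 𝕜] [LinearOrder 𝕜] [IsStrictOrderedRing 𝕜] {s s' : Bool} {t t' : 𝕜}

theorem mul_iff {μ : 𝕜} (hμ : 0 < μ) : PosOrNonneg s (μ * t) ↔ PosOrNonneg s t := by
  cases s
  exacts [mul_nonneg_iff_of_pos_left hμ, mul_pos_iff_of_pos_left hμ]

theorem div_iff {μ : 𝕜} (hμ : 0 < μ) : PosOrNonneg s (t / μ) ↔ PosOrNonneg s t := by
  rw [div_eq_inv_mul, mul_iff (inv_pos.2 hμ)]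

theorem linear_combination {μ ν : 𝕜} (hμ : 0 < μ) (hν : 0 < ν) (h : PosOrNonneg s t)
    (h' : PosOrNonneg s' t') : PosOrNonneg (s || s') (μ * t + ν * t') := by
  cases s <;> cases s' <;> simp only [PosOrNonneg, Bool.false_or, Bool.or_false, Bool.or_self,
    Bool.false_eq_true, if_true, if_false] at h h' ⊢ <;> positivity

end PosOrNonneg

section LinearOrderedField

variable {𝕜 : Type*} [Field 𝕜] [LinearOrder 𝕜] [IsStrictOrderedRing 𝕜]

theorem Convex.nonempty_iInter_of_forall_inter_nonempty {ι : Type*} [Finite ι] {F : ι → Set 𝕜}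
    (hF : ∀ i, Convex 𝕜 (F i)) (hinter : ∀ i j, (F i ∩ F j).Nonempty) :
    (⋂ i, F i).Nonempty := by
  classical
  cases nonempty_fintype ι
  have := Convex.helly_theorem' (s := Finset.univ) (fun i _ => hF i) fun I _ hI => by
    rw [Module.finrank_self] at hI
    obtain rfl | ⟨i, hi⟩ := I.eq_empty_or_nonempty
    · simp
    have : Nonempty ι := ⟨i⟩
    obtain ⟨j, hj⟩ := (Finset.card_le_one_iff_subset_singleton (s := I.erase i)).1
      (by rw [Finset.card_erase_of_mem hi]; omega)
    obtain ⟨x, hxi, hxj⟩ := hinter i j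
    refine ⟨x, Set.mem_iInter₂.2 fun k hk => ?_⟩
    obtain rfl | hki := eq_or_ne k i
    · exact hxi
    · rw [Finset.mem_singleton.1 (hj (Finset.mem_erase.2 ⟨hki, hk⟩))]
      exact hxj
  simpa using this

theorem convex_setOf_posOrNonneg (s : Bool) (a b : 𝕜) :
    Convex 𝕜 {l : 𝕜 | PosOrNonneg s (b * l - a)} := by
  have hb : IsLinearMap 𝕜 (b * · : 𝕜 → 𝕜) := (LinearMap.mulLeft 𝕜 b).isLinear
  cases s
  · simpa [PosOrNonneg, sub_nonneg] using convex_halfSpace_ge hb a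
  · simpa [PosOrNonneg, sub_pos] using convex_halfSpace_gt hb a

theorem exists_posOrNonneg_mul_sub {s : Bool} {a b : 𝕜} (h : b = 0 → PosOrNonneg s (-a)) :
    ∃ l, PosOrNonneg s (b * l - a) := by
  rcases eq_or_ne b 0 with hb | hb
  · exact ⟨0, by simpa [hb] using h hb⟩
  · exact ⟨(a + 1) / b, .of_pos (by field_simp; simp)⟩

theorem exists_posOrNonneg_mul_sub_pair_of_pos_of_neg {s₁ s₂ : Bool} {a₁ a₂ b₁ b₂ : 𝕜}
    (hb₁ : 0 < b₁) (hb₂ : b₂ < 0) (h : PosOrNonneg (s₁ || s₂) (b₂ * a₁ - b₁ * a₂)) :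
    ∃ l, PosOrNonneg s₁ (b₁ * l - a₁) ∧ PosOrNonneg s₂ (b₂ * l - a₂) := by
  have hd : 0 < b₁ - b₂ := by linarith
  -- at this `l` both constraints take the same value `(b₂ * a₁ - b₁ * a₂) / (b₁ - b₂)`
  refine ⟨(a₁ - a₂) / (b₁ - b₂), ?_, ?_⟩
  · convert ((PosOrNonneg.div_iff hd).2 h).of_or_left using 1
    field_simp
    ring
  · convert ((PosOrNonneg.div_iff hd).2 h).of_or_right using 1
    field_simp
    ring

theorem exists_posOrNonneg_mul_sub_pair {s₁ s₂ : Bool} {a₁ a₂ b₁ b₂ : 𝕜}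
    (h₁ : b₁ = 0 → PosOrNonneg s₁ (-a₁)) (h₂ : b₂ = 0 → PosOrNonneg s₂ (-a₂))
    (h₁₂ : 0 < b₁ → b₂ < 0 → PosOrNonneg (s₁ || s₂) (b₂ * a₁ - b₁ * a₂))
    (h₂₁ : 0 < b₂ → b₁ < 0 → PosOrNonneg (s₂ || s₁) (b₁ * a₂ - b₂ * a₁)) :
    ∃ l, PosOrNonneg s₁ (b₁ * l - a₁) ∧ PosOrNonneg s₂ (b₂ * l - a₂) := by
  rcases eq_or_ne b₁ 0 with hb₁ | hb₁
  · obtain ⟨l, hl⟩ := exists_posOrNonneg_mul_sub h₂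
    exact ⟨l, by simpa [hb₁] using h₁ hb₁, hl⟩
  rcases eq_or_ne b₂ 0 with hb₂ | hb₂
  · obtain ⟨l, hl⟩ := exists_posOrNonneg_mul_sub h₁
    exact ⟨l, hl, by simpa [hb₂] using h₂ hb₂⟩
  obtain ⟨l₁, hl₁⟩ := exists_posOrNonneg_mul_sub (s := s₁) (a := a₁) (absurd · hb₁)
  obtain ⟨l₂, hl₂⟩ := exists_posOrNonneg_mul_sub (s := s₂) (a := a₂) (absurd · hb₂)
  rcases hb₁.lt_or_gt with hb₁ | hb₁ <;> rcases hb₂.lt_or_gt with hb₂ | hb₂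
  · refine ⟨min l₁ l₂, hl₁.mono ?_, hl₂.mono ?_⟩
    · exact sub_le_sub_right (mul_le_mul_of_nonpos_left (min_le_left _ _) hb₁.le) _
    · exact sub_le_sub_right (mul_le_mul_of_nonpos_left (min_le_right _ _) hb₂.le) _
  · exact (exists_posOrNonneg_mul_sub_pair_of_pos_of_neg hb₂ hb₁ (h₂₁ hb₂ hb₁)).imp
      fun _ => And.symm
  · exact exists_posOrNonneg_mul_sub_pair_of_pos_of_neg hb₁ hb₂ (h₁₂ hb₁ hb₂)
  · refine ⟨max l₁ l₂, hl₁.mono ?_, hl₂.mono ?_⟩ <;> gcongr <;> simp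

theorem exists_forall_posOrNonneg_iff {ι : Type*} [Finite ι] (a b : ι → 𝕜) (s : ι → Bool) :
    (∃ l, ∀ i, PosOrNonneg (s i) (b i * l - a i)) ↔
      (∀ i, b i = 0 → PosOrNonneg (s i) (-a i)) ∧
        ∀ i j, 0 < b i → b j < 0 → PosOrNonneg (s i || s j) (b j * a i - b i * a j) := by
  constructor
  · rintro ⟨l, hl⟩
    refine ⟨fun i hb => by simpa [hb] using hl i, fun i j hi hj => ?_⟩
    convert (hl i).linear_combination (neg_pos.2 hj) hi (hl j) using 1
    ring
  · rintro ⟨h0, hpair⟩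
    simpa using Convex.nonempty_iInter_of_forall_inter_nonempty
      (F := fun i => {l | PosOrNonneg (s i) (b i * l - a i)})
      (fun i => convex_setOf_posOrNonneg _ _ _)
      fun i j => exists_posOrNonneg_mul_sub_pair (h0 i) (h0 j) (hpair i j) (hpair j i)

end LinearOrderedField

open Matrix

theorem isHomLinearSet_setOf_forall {n : ℕ} {ι : Type*} [Finite ι] (c : ι → Fin n → ℚ)
    (s : ι → Bool) : IsHomLinearSet n {x | ∀ i, PosOrNonneg (s i) (c i ⬝ᵥ x)} := by
  cases nonempty_fintype ι
  let e := Fintype.equivFin ι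
  refine ⟨Fintype.card ι, c ∘ e.symm, s ∘ e.symm, ?_⟩
  ext x
  exact e.symm.forall_congr_right.symm

theorem isHomLinearSet_setOf_exists {n : ℕ} {ι : Type*} [Finite ι] (c : ι → Fin n → ℚ)
    (b : ι → ℚ) (s : ι → Bool) :
    IsHomLinearSet n {y | ∃ l, ∀ i, PosOrNonneg (s i) (b i * l - c i ⬝ᵥ y)} := by
  let κ := {i // b i = 0} ⊕ {p : ι × ι // 0 < b p.1 ∧ b p.2 < 0}
  let c' : κ → Fin n → ℚ :=
    Sum.elim (fun i => -c i) fun p => b p.1.2 • c p.1.1 - b p.1.1 • c p.1.2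
  let s' : κ → Bool := Sum.elim (fun i => s i) fun p => s p.1.1 || s p.1.2
  convert isHomLinearSet_setOf_forall c' s' using 2 with y
  simp [exists_forall_posOrNonneg_iff, κ, c', s', Sum.forall, Subtype.forall, Prod.forall,
    sub_dotProduct, smul_dotProduct]

theorem posOrNonneg_sub_iff (s : Bool) (u v : ℚ) :
    PosOrNonneg s (v - u) ↔ if s then u < v else u ≤ v := by
  cases s <;> simp [PosOrNonneg]

theorem mem_coneOf_setOf_iff {n : ℕ} {ι : Type*} (c : ι → Fin n → ℚ) (b : ι → ℚ) (s : ι → Bool)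
    (y : Fin n → ℚ) :
    y ∈ coneOf {x | ∀ i, PosOrNonneg (s i) (b i - c i ⬝ᵥ x)} ↔
      ∃ l, 0 < l ∧ ∀ i, PosOrNonneg (s i) (b i * l - c i ⬝ᵥ y) := by
  constructor
  · rintro ⟨l, x, hl, hx, rfl⟩
    refine ⟨l, hl, fun i => ?_⟩
    have : b i * l - c i ⬝ᵥ (l • x) = l * (b i - c i ⬝ᵥ x) := by
      rw [dotProduct_smul, smul_eq_mul]
      ring
    exact this ▸ (PosOrNonneg.mul_iff hl).2 (hx i)
  · rintro ⟨l, hl, hy⟩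
    refine ⟨l, l⁻¹ • y, hl, fun i => ?_, (smul_inv_smul₀ hl.ne' y).symm⟩
    have : b i - c i ⬝ᵥ (l⁻¹ • y) = l⁻¹ * (b i * l - c i ⬝ᵥ y) := by
      rw [dotProduct_smul, smul_eq_mul]
      field_simp
    exact this ▸ (PosOrNonneg.mul_iff (inv_pos.2 hl)).2 (hy i)

theorem IsLinearSetQ.isHomLinearSet_coneOf {n : ℕ} {S : Set (Fin n → ℚ)}
    (hS : IsLinearSetQ n S) : IsHomLinearSet n (coneOf S) := by
  obtain ⟨m, c, b, strict, rfl⟩ := hS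
  -- `0 < l` is encoded as the extra constraint `0 < 1 * l - 0 ⬝ᵥ y`, indexed by `none`
  convert isHomLinearSet_setOf_exists (ι := Option (Fin m)) (fun o => o.elim 0 c)
    (fun o => o.elim 1 b) (fun o => o.elim true strict) using 1
  have hlin : {x | ∀ i, if strict i then ∑ j, c i j * x j < b i else ∑ j, c i j * x j ≤ b i} =
      {x | ∀ i, PosOrNonneg (strict i) (b i - c i ⬝ᵥ x)} := by
    simp only [posOrNonneg_sub_iff, dotProduct]
  ext y
  rw [hlin, mem_coneOf_setOf_iff]
  simp only [Set.mem_ofPred_eq, Option.forall, Option.elim, zero_dotProduct, one_mul, sub_zero]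
  rfl

theorem coneOf_iUnion {n : ℕ} {ι : Type*} (f : ι → Set (Fin n → ℚ)) :
    coneOf (⋃ i, f i) = ⋃ i, coneOf (f i) := by
  ext y
  simp only [coneOf, Set.mem_ofPred_eq, Set.mem_iUnion]
  constructor
  · rintro ⟨l, x, hl, ⟨i, hi⟩, rfl⟩
    exact ⟨i, l, x, hl, hi, rfl⟩
  · rintro ⟨i, l, x, hl, hx, rfl⟩
    exact ⟨l, x, hl, ⟨i, hx⟩, rfl⟩

theorem stmt13_general {n : ℕ} (R : Set (Fin n → ℚ)) (hR : IsSemilinear n R) :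
    ∃ (k : ℕ) (f : Fin k → Set (Fin n → ℚ)),
      (∀ i, IsHomLinearSet n (f i)) ∧ coneOf R = ⋃ i, f i := by
  obtain ⟨k, f, hf, rfl⟩ := hR
  exact ⟨k, fun i => coneOf (f i), fun i => (hf i).isHomLinearSet_coneOf, coneOf_iUnion f⟩

/-- Let R ⊆ ℚ^n be semilinear such that whenever y•v ∈ R for some rational
y > 0, there is ε > 0 with y•v ∈ R for all rational 0 < y < ε.  Then cone(R)
is a finite union of homogeneous linear sets. -/
theorem stmt13 {n : ℕ} (R : Set (Fin n → ℚ)) (hR : IsSemilinear n R)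
    (h : ∀ v : Fin n → ℚ, (∃ y : ℚ, 0 < y ∧ y • v ∈ R) →
      ∃ ε : ℚ, 0 < ε ∧ ∀ y : ℚ, 0 < y → y < ε → y • v ∈ R) :
    ∃ (k : ℕ) (f : Fin k → Set (Fin n → ℚ)),
      (∀ i, IsHomLinearSet n (f i)) ∧ coneOf R = ⋃ i, f i :=
  stmt13_general R hR
end

section
/- Let R₁, …, R_m be scalable relations with R_j ⊆ ℚ^{k_j}. Let V be a finite set of variables and consider a finite list of constraints, the l-th constraint being given by an index j(l) and a map σ_l : {1,…,k_{j(l)}} → V. If there exists s : V → ℚ with (s(σ_l(1)),…,s(σ_l(k_{j(l)}))) ∈ R_{j(l)} for every l, then there exists s' : V → ℚ taking only integer values (for every v ∈ V there is n ∈ ℤ with s'(v) = n) with (s'(σ_l(1)),…,s'(σ_l(k_{j(l)}))) ∈ R_{j(l)} for every l. -/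
/-!
Scale a rational solution `s` by a natural number `N`. Every constraint stays satisfied as soon
as `N` exceeds the finitely many scaling thresholds of the constraints, and `N • s` is integral
as soon as `N` is a multiple of the common denominator `∏ v, (s v).den`. Multiples of the common
denominator are unbounded, so some `N` does both.
-/

/-- A relation R ⊆ ℚ^k is scalable if for every x ∈ R there is a rational
A > 0 such that a•x ∈ R for all rational a ≥ A. -/
def Scalable {k : ℕ} (R : Set (Fin k → ℚ)) : Prop :=
  ∀ x ∈ R, ∃ A : ℚ, 0 < A ∧ ∀ a : ℚ, A ≤ a → a • x ∈ R

open Filter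

theorem Scalable.eventually_smul_mem {k : ℕ} {R : Set (Fin k → ℚ)} (hR : Scalable R)
    {x : Fin k → ℚ} (hx : x ∈ R) : ∀ᶠ a : ℚ in atTop, a • x ∈ R := by
  obtain ⟨A, -, hA⟩ := hR x hx
  exact eventually_atTop.2 ⟨A, hA⟩

theorem eventually_forall_smul_mem_of_scalable {V ι : Type*} [Finite ι] {k : ι → ℕ}
    {R : ∀ l, Set (Fin (k l) → ℚ)} (hR : ∀ l, Scalable (R l)) (σ : ∀ l, Fin (k l) → V)
    {s : V → ℚ} (hs : ∀ l, (fun i => s (σ l i)) ∈ R l) :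
    ∀ᶠ a : ℚ in atTop, ∀ l, (fun i => (a • s) (σ l i)) ∈ R l :=
  eventually_all.2 fun l => (hR l).eventually_smul_mem (hs l)

theorem Rat.exists_intCast_eq_mul_of_den_dvd {q : ℚ} {n : ℕ} (hn : q.den ∣ n) :
    ∃ z : ℤ, (n : ℚ) * q = z := by
  obtain ⟨c, rfl⟩ := hn
  exact ⟨c * q.num, by push_cast; rw [mul_comm (q.den : ℚ), mul_assoc, Rat.den_mul_eq_num]⟩

/-- Every satisfiable CSP instance over scalable relations has an integer
solution. -/
theorem stmt18 {m : ℕ} (k : Fin m → ℕ) (R : (j : Fin m) → Set (Fin (k j) → ℚ))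
    (hR : ∀ j, Scalable (R j))
    (V : Type) [Fintype V] (L : ℕ) (idx : Fin L → Fin m)
    (σ : (l : Fin L) → Fin (k (idx l)) → V)
    (h : ∃ s : V → ℚ, ∀ l, (fun i => s (σ l i)) ∈ R (idx l)) :
    ∃ s' : V → ℚ, (∀ v, ∃ z : ℤ, s' v = z) ∧
      ∀ l, (fun i => s' (σ l i)) ∈ R (idx l) := by
  obtain ⟨s, hs⟩ := h
  set d : ℕ := ∏ v, (s v).den
  have hd : 0 < d := Finset.prod_pos fun v _ => (s v).den_pos
  have hmultiples : Tendsto (fun n : ℕ => ((d * n : ℕ) : ℚ)) atTop atTop :=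
    tendsto_natCast_atTop_atTop.comp (tendsto_id.const_mul_atTop' hd)
  have hsol := eventually_forall_smul_mem_of_scalable (fun l => hR (idx l)) σ hs
  obtain ⟨n, hn⟩ := (hmultiples.eventually hsol).exists
  refine ⟨((d * n : ℕ) : ℚ) • s, fun v => Rat.exists_intCast_eq_mul_of_den_dvd ?_, hn⟩
  exact (Finset.dvd_prod_of_mem _ (Finset.mem_univ v)).mul_right n
end

section
/- Let R ⊆ ℚ^k be a semilinear set and let p ∈ R be such that for every rational A > 0 there exists a rational a ≥ A with a•p ∉ R. Then the set U = {a ∈ ℚ | a•p ∈ R} contains 1 and there exists M ∈ ℚ such that U ∩ (M, ∞) = ∅. -/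
open Set

theorem bddAbove_iUnion_iff {ι α : Type*} [Finite ι] [Preorder α] [IsDirectedOrder α] [Nonempty α]
    {S : ι → Set α} : BddAbove (⋃ i, S i) ↔ ∀ i, BddAbove (S i) := by
  simpa using Set.finite_univ.bddAbove_biUnion (S := S)

theorem Set.OrdConnected.Ici_subset_of_not_bddAbove {α : Type*} [LinearOrder α] {s : Set α}
    (hs : s.OrdConnected) (hbdd : ¬BddAbove s) {a : α} (ha : a ∈ s) : Ici a ⊆ s := by
  intro x hx
  obtain ⟨b, hb, hxb⟩ := not_bddAbove_iff.1 hbdd x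
  exact hs.out ha hb ⟨hx, hxb.le⟩

theorem Convex.ordConnected_smul_preimage {E : Type*} [AddCommGroup E] [Module ℚ E] {S : Set E}
    (hS : Convex ℚ S) (p : E) : {a : ℚ | a • p ∈ S}.OrdConnected :=
  (hS.linear_preimage (LinearMap.toSpanSingleton ℚ E p)).ordConnected

theorem isLinearMap_sum_mul {n : ℕ} (c : Fin n → ℚ) :
    IsLinearMap ℚ fun x : Fin n → ℚ => ∑ j, c j * x j :=
  ⟨fun x y => by simp only [Pi.add_apply, mul_add, Finset.sum_add_distrib],
    fun a x => by simp only [Pi.smul_apply, smul_eq_mul, Finset.mul_sum, mul_left_comm]⟩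

theorem IsLinearSetQ.convex {n : ℕ} {S : Set (Fin n → ℚ)} (hS : IsLinearSetQ n S) :
    Convex ℚ S := by
  obtain ⟨m, c, b, strict, rfl⟩ := hS
  simp only [ofPred_forall]
  refine convex_iInter fun i => ?_
  cases strict i
  · exact convex_halfSpace_le (isLinearMap_sum_mul (c i)) (b i)
  · exact convex_halfSpace_lt (isLinearMap_sum_mul (c i)) (b i)

/-- Let R ⊆ ℚ^k be semilinear and p ∈ R such that for every rational A > 0
there is a rational a ≥ A with a•p ∉ R.  Then U = {a ∈ ℚ | a•p ∈ R} contains 1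
and U ∩ (M, ∞) = ∅ for some M ∈ ℚ. -/
theorem stmt19 {k : ℕ} (R : Set (Fin k → ℚ)) (hR : IsSemilinear k R)
    (p : Fin k → ℚ) (hp : p ∈ R)
    (h : ∀ A : ℚ, 0 < A → ∃ a : ℚ, A ≤ a ∧ a • p ∉ R) :
    (1 : ℚ) ∈ {a : ℚ | a • p ∈ R} ∧
      ∃ M : ℚ, {a : ℚ | a • p ∈ R} ∩ Set.Ioi M = ∅ := by
  obtain ⟨K, f, hf, rfl⟩ := hR
  refine ⟨by simpa using hp, ?_⟩
  suffices hbdd : BddAbove (⋃ i, {a : ℚ | a • p ∈ f i}) by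
    obtain ⟨M, hM⟩ := hbdd
    refine ⟨M, eq_empty_of_forall_notMem fun a ⟨ha, haM⟩ => not_le.2 haM (hM ?_)⟩
    simpa using ha
  refine bddAbove_iUnion_iff.2 fun i => by_contra fun hi => ?_
  obtain ⟨a₀, ha₀, ha₀_pos⟩ := not_bddAbove_iff.1 hi 0
  obtain ⟨a, ha₀a, ha⟩ := h a₀ ha₀_pos
  have hUi := ((hf i).convex.ordConnected_smul_preimage p).Ici_subset_of_not_bddAbove hi ha₀
  exact ha (mem_iUnion.2 ⟨i, hUi ha₀a⟩)
end
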